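/- arXiv:1706.03233 — 9 statements merged into one kernel-verified Lean document; each statement's English description precedes it below -/
import Mathlib

section
/- If an infinite binary word w avoids the factors 000, 111, 0101, and 1100, then w is (up to removing a prefix of length at most 2) the image of some binary word under the morphism m_a defined by m_a(x) = x·01, i.e., every factor 01 in w extends to the right to either 01001 or 01101. -/
def OccursAt {α : Type*} (u : List α) (w : ℕ → α) (i : ℕ) : Prop :=
  ∀ j : Fin u.length, w (i + j) = u.get j

def IsFactor {α : Type*} (u : List α) (w : ℕ → α) : Prop :=
  ∃ i, OccursAt u w i

/-- If an infinite binary word avoids the factors `000`, `111`, `0101`, `1100`, then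
every occurrence of the factor `01`, extended by three letters to the right, yields
`01001` or `01101` (so the word is an image under the morphism `x ↦ x01`). -/
theorem stmt_2 (w : ℕ → Fin 2)
    (h000 : ¬ IsFactor [0, 0, 0] w)
    (h111 : ¬ IsFactor [1, 1, 1] w)
    (h0101 : ¬ IsFactor [0, 1, 0, 1] w)
    (h1100 : ¬ IsFactor [1, 1, 0, 0] w) :
    ∀ i : ℕ, w i = 0 → w (i + 1) = 1 →
      OccursAt [0, 1, 0, 0, 1] w i ∨ OccursAt [0, 1, 1, 0, 1] w i := by
  have two : ∀ x : Fin 2, x = 0 ∨ x = 1 := by decide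
  intro i h0 h1
  rcases two (w (i+2)) with h2 | h2
  · -- case w(i+2)=0
    have h3 : w (i+3) = 0 := by
      rcases two (w (i+3)) with h | h
      · exact h
      · exact absurd ⟨i, fun j => by fin_cases j <;> simp [Nat.add_assoc] <;> simp_all <;> rfl⟩ h0101
    have h4 : w (i+4) = 1 := by
      rcases two (w (i+4)) with h | h
      · exact absurd ⟨i+2, fun j => by fin_cases j <;> simp [Nat.add_assoc] <;> simp_all <;> rfl⟩ h000
      · exact h
    left
    intro j
    fin_cases j <;> simp [Nat.add_assoc] <;> simp_all <;> rfl
  · -- case w(i+2)=1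
    have h3 : w (i+3) = 0 := by
      rcases two (w (i+3)) with h | h
      · exact h
      · exact absurd ⟨i+1, fun j => by fin_cases j <;> simp [Nat.add_assoc] <;> simp_all <;> rfl⟩ h111
    have h4 : w (i+4) = 1 := by
      rcases two (w (i+4)) with h | h
      · exact absurd ⟨i+1, fun j => by fin_cases j <;> simp [Nat.add_assoc] <;> simp_all <;> rfl⟩ h1100
      · exact h
    right
    intro j
    fin_cases j <;> simp [Nat.add_assoc] <;> simp_all <;> rfl
end

section
/- In the image m_a(w) = w_0 01 w_1 01 w_2 01 ... of a binary word w under the morphism m_a(x) = x01, every occurrence of the factor 00 is at a position congruent to 0 mod 3, every occurrence of 01 is at position 1 mod 3, and every occurrence of 11 is at position 2 mod 3. -/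
/-- The morphism `m_a : 0 ↦ 001, 1 ↦ 101`, i.e. `x ↦ x·01`. -/
def ma (w : List (Fin 2)) : List (Fin 2) :=
  w.flatMap fun x => [x, 0, 1]

/-- `u` occurs at position `i` in the finite word `v`. -/
def OccursAtIn {α : Type*} (u v : List α) (i : ℕ) : Prop :=
  (v.drop i).take u.length = u

lemma ma_key (w : List (Fin 2)) : ∀ i x, (ma w)[i]? = some x →
    (i % 3 = 1 → x = 0) ∧ (i % 3 = 2 → x = 1) := by
  induction w with
  | nil => intro i x h; simp [ma] at h
  | cons a w ih =>
    intro i x h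
    have hma : ma (a :: w) = a :: 0 :: 1 :: ma w := rfl
    rw [hma] at h
    match i with
    | 0 => exact ⟨fun hm => by simp at hm, fun hm => by simp at hm⟩
    | 1 =>
      simp at h
      exact ⟨fun _ => h.symm, fun hm => by simp at hm⟩
    | 2 =>
      simp at h
      exact ⟨fun hm => by simp at hm, fun _ => h.symm⟩
    | n + 3 =>
      simp only [List.getElem?_cons_succ] at h
      have := ih n x h
      constructor <;> intro hm <;> [exact this.1 (by omega); exact this.2 (by omega)]

lemma occ_pair {u0 u1 : Fin 2} {v : List (Fin 2)} {i : ℕ}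
    (h : OccursAtIn [u0, u1] v i) : v[i]? = some u0 ∧ v[i + 1]? = some u1 := by
  unfold OccursAtIn at h
  cases hd : v.drop i with
  | nil => rw [hd] at h; simp at h
  | cons a t =>
    cases t with
    | nil => rw [hd] at h; simp at h
    | cons b t' =>
      rw [hd] at h
      simp at h
      obtain ⟨ha, hb⟩ := h
      have h0 : (v.drop i)[0]? = some u0 := by rw [hd]; simp [ha]
      have h1 : (v.drop i)[1]? = some u1 := by rw [hd]; simp [hb]
      rw [List.getElem?_drop] at h0 h1
      exact ⟨h0, h1⟩

/-- In `m_a(w)`, every occurrence of `00` is at position `≡ 0 (mod 3)`, every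
occurrence of `01` at position `≡ 1 (mod 3)`, and every occurrence of `11`
at position `≡ 2 (mod 3)`. -/
theorem stmt_3 (w : List (Fin 2)) (i : ℕ) :
    (OccursAtIn [0, 0] (ma w) i → i % 3 = 0) ∧
    (OccursAtIn [0, 1] (ma w) i → i % 3 = 1) ∧
    (OccursAtIn [1, 1] (ma w) i → i % 3 = 2) := by
  have h3 : i % 3 = 0 ∨ i % 3 = 1 ∨ i % 3 = 2 := by omega
  refine ⟨fun h => ?_, fun h => ?_, fun h => ?_⟩ <;>
  · obtain ⟨h0, h1⟩ := occ_pair h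
    have k0 := ma_key w i _ h0
    have k1 := ma_key w (i + 1) _ h1
    rcases h3 with h3 | h3 | h3 <;>
      first
        | exact h3
        | (exfalso; revert k0 k1; simp [h3, Nat.add_mod])
end

section
/- Let c(n) denote the number of words of length n in the set S (closure of {0} under the morphisms m_a(x)=x01 and m_b(x)=x10 and under taking factors). Then c(n) = 2(c(⌈n/3⌉) + c(⌈(n-1)/3⌉) + c(⌈(n-2)/3⌉)) for every n ≥ 8, and consequently c(n) = Θ(n^{1+ln2/ln3}). -/
/-- The morphism `m_b : x ↦ x·10`. -/
def mb (w : List (Fin 2)) : List (Fin 2) := w.flatMap fun x => [x, 1, 0]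

/-- The set `S`: smallest set containing `0`, closed under `m_a`, `m_b`, and factors. -/
inductive InS : List (Fin 2) → Prop
  | zero : InS [0]
  | ma : ∀ v, InS v → InS (ma v)
  | mb : ∀ v, InS v → InS (mb v)
  | factor : ∀ v v' : List (Fin 2), InS v → v' <:+: v → InS v'

/-- `c n` is the number of words of length `n` in `S`. -/
noncomputable def c (n : ℕ) : ℕ :=
  {u : List (Fin 2) | InS u ∧ u.length = n}.ncard

/-- generic 3-uniform morphism `x ↦ [x,p,q]`. -/
def mgen (p q : Fin 2) (w : List (Fin 2)) : List (Fin 2) := w.flatMap fun x => [x, p, q]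

lemma ma_eq : ma = mgen 0 1 := rfl
lemma mb_eq : mb = mgen 1 0 := rfl

lemma mgen_nil (p q : Fin 2) : mgen p q [] = [] := rfl
lemma mgen_cons (p q x : Fin 2) (w : List (Fin 2)) :
    mgen p q (x :: w) = x :: p :: q :: mgen p q w := rfl

lemma mgen_append (p q : Fin 2) (v w : List (Fin 2)) :
    mgen p q (v ++ w) = mgen p q v ++ mgen p q w := List.flatMap_append ..

lemma mgen_length (p q : Fin 2) (w : List (Fin 2)) :
    (mgen p q w).length = 3 * w.length := by
  induction w with
  | nil => rfl
  | cons x w ih => simp [mgen_cons, ih]; ring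

lemma mgen_getElem? (p q : Fin 2) (w : List (Fin 2)) (k : ℕ) :
    (mgen p q w)[k]? = w[k / 3]?.bind (fun x => [x, p, q][k % 3]?) := by
  induction w generalizing k with
  | nil => simp [mgen_nil]
  | cons x w ih =>
    rw [mgen_cons]
    match k with
    | 0 => simp
    | 1 => simp
    | 2 => simp
    | (k + 3) =>
      have h1 : (k + 3) / 3 = k / 3 + 1 := by omega
      have h2 : (k + 3) % 3 = k % 3 := by omega
      simp only [List.getElem?_cons_succ, h1, h2, ih]

lemma mgen_infix (p q : Fin 2) {v w : List (Fin 2)} (h : v <:+: w) :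
    mgen p q v <:+: mgen p q w := by
  obtain ⟨s, t, rfl⟩ := h
  exact ⟨mgen p q s, mgen p q t, by rw [← mgen_append, ← mgen_append]⟩

lemma mgen_take (p q : Fin 2) (w : List (Fin 2)) (k : ℕ) :
    mgen p q (w.take k) = (mgen p q w).take (3 * k) := by
  apply List.ext_getElem?
  intro j
  rw [mgen_getElem?, List.getElem?_take, List.getElem?_take, mgen_getElem?]
  by_cases h : j < 3 * k
  · rw [if_pos h, if_pos (by omega : j / 3 < k)]
  · rw [if_neg h]
    by_cases h2 : j / 3 < k
    · omega
    · rw [if_neg h2]; rfl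

lemma mgen_drop (p q : Fin 2) (w : List (Fin 2)) (k : ℕ) :
    mgen p q (w.drop k) = (mgen p q w).drop (3 * k) := by
  apply List.ext_getElem?
  intro j
  rw [mgen_getElem?, List.getElem?_drop, List.getElem?_drop, mgen_getElem?]
  have h1 : (3 * k + j) / 3 = k + j / 3 := by omega
  have h2 : (3 * k + j) % 3 = j % 3 := by omega
  rw [h1, h2]

/-- an infix gives getElem? equalities. -/
lemma infix_getElem? {α : Type*} {u w : List α} (h : u <:+: w) :
    ∃ k, k + u.length ≤ w.length ∧ ∀ j < u.length, w[k + j]? = u[j]? := by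
  obtain ⟨s, t, rfl⟩ := h
  refine ⟨s.length, by simp <;> omega, fun j hj => ?_⟩
  rw [List.append_assoc, List.getElem?_append_right (by omega),
    Nat.add_sub_cancel_left, List.getElem?_append_left hj]

/-- no constant triple is an infix of an image under `mgen p q` with `p ≠ q`. -/
lemma no_triple_mgen {p q a : Fin 2} (hpq : p ≠ q) (w : List (Fin 2)) :
    ¬ ([a, a, a] <:+: mgen p q w) := by
  intro h
  obtain ⟨k, hk, hval⟩ := infix_getElem? h
  simp only [List.length_cons, List.length_nil, mgen_length] at hk
  have key : ∀ j < 3, ∃ x : Fin 2, (mgen p q w)[k + j]? = some x ∧ x = a := by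
    intro j hj
    have := hval j (by simpa using hj)
    refine ⟨a, this.trans ?_, rfl⟩
    interval_cases j <;> rfl
  -- find positions with residues 1 and 2
  obtain ⟨j1, hj1, hr1⟩ : ∃ j < 3, (k + j) % 3 = 1 :=
    ⟨(4 - k % 3) % 3, by omega, by omega⟩
  obtain ⟨j2, hj2, hr2⟩ : ∃ j < 3, (k + j) % 3 = 2 :=
    ⟨(5 - k % 3) % 3, by omega, by omega⟩
  obtain ⟨x1, hx1, hax1⟩ := key j1 hj1
  obtain ⟨x2, hx2, hax2⟩ := key j2 hj2
  rw [mgen_getElem?, hr1] at hx1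
  rw [mgen_getElem?, hr2] at hx2
  have hp : p = a := by
    rcases h' : w[(k + j1) / 3]? with _ | y
    · rw [h'] at hx1; simp at hx1
    · rw [h'] at hx1; simp at hx1; omega
  have hq : q = a := by
    rcases h' : w[(k + j2) / 3]? with _ | y
    · rw [h'] at hx2; simp at hx2
    · rw [h'] at hx2; simp at hx2; omega
  exact hpq (hp.trans hq.symm)

lemma InS_no_triple {u : List (Fin 2)} (h : InS u) (a : Fin 2) : ¬ ([a, a, a] <:+: u) := by
  induction h with
  | zero => intro h; have := h.length_le; simp at this
  | ma v _ ih => exact no_triple_mgen (by decide) v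
  | mb v _ ih => exact no_triple_mgen (by decide) v
  | factor v v' _ hinf ih => intro h; exact ih (h.trans hinf)

lemma not_InS_000 : ¬ InS [0, 0, 0] := fun h => InS_no_triple h 0 (List.infix_refl _)
lemma not_InS_111 : ¬ InS [1, 1, 1] := fun h => InS_no_triple h 1 (List.infix_refl _)

/-- pure words: images of [0] under the morphisms only -/
inductive PureW : List (Fin 2) → Prop
  | zero : PureW [0]
  | ma : ∀ v, PureW v → PureW (mgen 0 1 v)
  | mb : ∀ v, PureW v → PureW (mgen 1 0 v)

lemma PureW.inS {g : List (Fin 2)} (h : PureW g) : InS g := by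
  induction h with
  | zero => exact InS.zero
  | ma v _ ih => exact InS.ma v ih
  | mb v _ ih => exact InS.mb v ih

lemma InS_iff_infix_pure {u : List (Fin 2)} :
    InS u ↔ ∃ g, PureW g ∧ u <:+: g := by
  constructor
  · intro h
    induction h with
    | zero => exact ⟨[0], PureW.zero, List.infix_refl _⟩
    | ma v _ ih => obtain ⟨g, hg, hinf⟩ := ih; exact ⟨mgen 0 1 g, hg.ma g, mgen_infix _ _ hinf⟩
    | mb v _ ih => obtain ⟨g, hg, hinf⟩ := ih; exact ⟨mgen 1 0 g, hg.mb g, mgen_infix _ _ hinf⟩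
    | factor v v' _ hinf ih =>
      obtain ⟨g, hg, hinf'⟩ := ih; exact ⟨g, hg, hinf.trans hinf'⟩
  · rintro ⟨g, hg, hinf⟩
    exact InS.factor g u hg.inS hinf

lemma PureW.exists_cons {g : List (Fin 2)} (h : PureW g) : ∃ x, InS (x :: g) := by
  induction h with
  | zero =>
    exact ⟨1, InS.factor _ _ (InS.mb _ InS.zero) ⟨[0], [], rfl⟩⟩
  | ma v hv ih =>
    obtain ⟨x, hx⟩ := ih
    refine ⟨1, InS.factor _ _ (InS.ma _ hx) ⟨[x, 0], [], ?_⟩⟩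
    simp [mgen_cons, ma_eq]
  | mb v hv ih =>
    obtain ⟨x, hx⟩ := ih
    refine ⟨0, InS.factor _ _ (InS.mb _ hx) ⟨[x, 1], [], ?_⟩⟩
    simp [mgen_cons, mb_eq]

lemma InS.exists_cons {v : List (Fin 2)} (h : InS v) : ∃ x, InS (x :: v) := by
  obtain ⟨g, hg, l, r, rfl⟩ := InS_iff_infix_pure.mp h
  rcases List.eq_nil_or_concat l with rfl | ⟨l', y, rfl⟩
  · obtain ⟨x, hx⟩ := hg.exists_cons
    exact ⟨x, InS.factor _ _ hx ⟨[], r, by simp⟩⟩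
  · exact ⟨y, InS.factor _ _ hg.inS ⟨l', r, by simp⟩⟩

lemma PureW.ne_nil {g : List (Fin 2)} (h : PureW g) : g ≠ [] := by
  induction h with
  | zero => simp
  | ma v hv ih => intro hc; apply ih; have := congrArg List.length hc; rw [mgen_length] at this; simpa using this
  | mb v hv ih => intro hc; apply ih; have := congrArg List.length hc; rw [mgen_length] at this; simpa using this

lemma exists_pure_long (n : ℕ) : ∃ g, PureW g ∧ n ≤ g.length := by
  induction n with
  | zero => exact ⟨[0], PureW.zero, by simp⟩
  | succ n ih =>
    obtain ⟨g, hg, hlen⟩ := ih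
    have h1 : 1 ≤ g.length := List.length_pos_iff.mpr hg.ne_nil
    exact ⟨mgen 0 1 g, hg.ma g, by rw [mgen_length]; omega⟩

lemma InS_exists_length (n : ℕ) : ∃ u, InS u ∧ u.length = n := by
  obtain ⟨g, hg, hlen⟩ := exists_pure_long n
  exact ⟨g.take n, InS.factor _ _ hg.inS (g.take_prefix n).isInfix,
    by rw [List.length_take]; omega⟩

/-- the partial first block seen at offset `i`. -/
def stail (p q : Fin 2) : ℕ → List (Fin 2)
  | 0 => []
  | 1 => [q]
  | _ => [p, q]

lemma stail_length (p q : Fin 2) {i : ℕ} (hi : i ≤ 2) : (stail p q i).length = i := by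
  interval_cases i <;> rfl

/-- `u` (of length `n`) arises from `v` via morphism `mgen p q` with offset `i`. -/
def RepW (p q : Fin 2) (i : ℕ) (v : List (Fin 2)) (n : ℕ) (u : List (Fin 2)) : Prop :=
  i ≤ 2 ∧ v.length = (n + 2 - i) / 3 ∧ u = stail p q i ++ (mgen p q v).take (n - i)

lemma RepW.length {p q : Fin 2} {i n : ℕ} {v u : List (Fin 2)}
    (h : RepW p q i v n u) (hn : 2 ≤ n) : u.length = n := by
  obtain ⟨hi, hv, rfl⟩ := h
  rw [List.length_append, stail_length p q hi, List.length_take, mgen_length, hv]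
  omega

lemma RepW.getElem {p q : Fin 2} {i n : ℕ} {v u : List (Fin 2)}
    (h : RepW p q i v n u) {j : ℕ} (hij : i ≤ j) (hjn : j < n) :
    u[j]? = if (j - i) % 3 = 0 then v[(j - i) / 3]?
      else if (j - i) % 3 = 1 then some p else some q := by
  obtain ⟨hi, hv, rfl⟩ := h
  rw [List.getElem?_append_right (by rw [stail_length p q hi]; omega), stail_length p q hi,
    List.getElem?_take, if_pos (by omega), mgen_getElem?]
  rcases h3 : (j - i) % 3 with _ | _ | k
  · simp only [if_pos rfl]
    rcases hvj : v[(j - i) / 3]? with _ | x <;> simp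
  · have hlt : (j - i) / 3 < v.length := by rw [hv]; omega
    rw [if_neg (by omega), if_pos rfl]
    rcases hvj : v[(j - i) / 3]? with _ | x
    · exact absurd (List.getElem?_eq_none_iff.mp hvj) (by omega)
    · simp
  · have hk0 : k = 0 := by omega
    subst hk0
    have hlt : (j - i) / 3 < v.length := by rw [hv]; omega
    rw [if_neg (by omega), if_neg (by omega)]
    rcases hvj : v[(j - i) / 3]? with _ | x
    · exact absurd (List.getElem?_eq_none_iff.mp hvj) (by omega)
    · simp

lemma RepW.getElem_low {p q : Fin 2} {i n : ℕ} {v u : List (Fin 2)}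
    (h : RepW p q i v n u) {j : ℕ} (hij : j < i) :
    u[j]? = (stail p q i)[j]? := by
  obtain ⟨hi, hv, rfl⟩ := h
  rw [List.getElem?_append_left (by rw [stail_length p q hi]; omega)]

lemma RepW.letter {p q : Fin 2} {i n : ℕ} {v u : List (Fin 2)}
    (h : RepW p q i v n u) {k : ℕ} (hk : k < v.length) (hn : 2 ≤ n) :
    u[i + 3 * k]? = v[k]? := by
  have hi := h.1
  have hv := h.2.1
  have hjn : i + 3 * k < n := by omega
  rw [h.getElem (by omega) hjn]
  simp only [Nat.add_sub_cancel_left]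
  rw [if_pos (by omega)]
  congr 1
  omega

lemma RepW.inj {p q : Fin 2} {i n : ℕ} {v v' u : List (Fin 2)}
    (h : RepW p q i v n u) (h' : RepW p q i v' n u) (hn : 2 ≤ n) : v = v' := by
  have hlen : v.length = v'.length := by rw [h.2.1, h'.2.1]
  apply List.ext_getElem?
  intro k
  by_cases hk : k < v.length
  · rw [← h.letter hk hn, ← h'.letter (by omega) hn]
  · rw [List.getElem?_eq_none_iff.mpr (by omega), List.getElem?_eq_none_iff.mpr (by omega)]

lemma RepW.inS {p q : Fin 2} {i n : ℕ} {v u : List (Fin 2)}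
    (hpq : (p = 0 ∧ q = 1) ∨ (p = 1 ∧ q = 0))
    (h : RepW p q i v n u) (hv : InS v) (hn : 2 ≤ n) : InS u := by
  have hm : ∀ w, InS w → InS (mgen p q w) := by
    rcases hpq with ⟨rfl, rfl⟩ | ⟨rfl, rfl⟩
    · exact fun w hw => InS.ma w hw
    · exact fun w hw => InS.mb w hw
  obtain ⟨hi, hlen, rfl⟩ := h
  interval_cases i
  · refine InS.factor _ _ (hm v hv) ⟨[], (mgen p q v).drop (n - 0), ?_⟩
    simp [stail]
  · obtain ⟨x, hx⟩ := hv.exists_cons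
    refine InS.factor _ _ (hm _ hx) ⟨[x, p], (mgen p q v).drop (n - 1), ?_⟩
    simp [stail, mgen_cons]
  · obtain ⟨x, hx⟩ := hv.exists_cons
    refine InS.factor _ _ (hm _ hx) ⟨[x], (mgen p q v).drop (n - 2), ?_⟩
    simp [stail, mgen_cons]

lemma exists_rep_of_infix_mgen {p q : Fin 2} {h u : List (Fin 2)} {n : ℕ}
    (hlen : u.length = n) (hn : 2 ≤ n) (hinf : u <:+: mgen p q h) :
    ∃ i v, v <:+: h ∧ RepW p q i v n u := by
  obtain ⟨s, t, e⟩ := hinf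
  have e' : u ++ t = ((mgen p q (h.drop (s.length / 3))).drop (s.length % 3)) := by
    rw [mgen_drop, List.drop_drop]
    have h1 : 3 * (s.length / 3) + s.length % 3 = s.length := by omega
    rw [h1, ← e, List.append_assoc, List.drop_left]
  have hu : u = ((mgen p q (h.drop (s.length / 3))).drop (s.length % 3)).take n := by
    rw [← e', ← hlen, List.take_left]
  have hL : 3 * (h.drop (s.length / 3)).length ≥ n + s.length % 3 := by
    have h1 := congrArg List.length e'
    simp only [List.length_append, List.length_drop, mgen_length] at h1 ⊢
    omega
  set t0 := h.drop (s.length / 3) with ht0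
  have ht0suf : t0 <:+ h := List.drop_suffix _ _
  rcases h3 : s.length % 3 with _ | _ | r
  · -- offset 0 within a block: i = 0
    rw [h3] at hu hL
    refine ⟨0, t0.take ((n + 2) / 3), ((List.take_prefix _ _).isInfix.trans ht0suf.isInfix),
      by omega, ?_, ?_⟩
    · rw [List.length_take]; omega
    · rw [hu, List.drop_zero, mgen_take, List.take_take]
      have h2 : min (n - 0) (3 * ((n + 2) / 3)) = n := by omega
      rw [h2]
      rfl
  · -- offset 1 within a block: i = 2, u starts with [p, q]
    rw [h3] at hu hL
    obtain ⟨x, t1, hxt⟩ : ∃ x t1, t0 = x :: t1 := by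
      rcases hte : t0 with _ | ⟨x, t1⟩
      · rw [hte] at hL; simp at hL
      · exact ⟨x, t1, rfl⟩
    have hsuf : x :: t1 <:+ h := by rw [← hxt]; exact ht0suf
    have ht1 : 3 * t1.length + 3 = 3 * t0.length := by rw [hxt, List.length_cons]; omega
    obtain ⟨m, rfl⟩ : ∃ m, n = m + 2 := ⟨n - 2, by omega⟩
    refine ⟨2, t1.take ((m + 2) / 3),
      ((List.take_prefix _ _).isInfix.trans ((List.suffix_cons x t1).trans hsuf).isInfix),
      by omega, ?_, ?_⟩
    · rw [List.length_take]; omega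
    · rw [hu, hxt, mgen_cons]
      have hd : (x :: p :: q :: mgen p q t1).drop 1 = p :: q :: mgen p q t1 := rfl
      rw [hd, List.take_succ_cons, List.take_succ_cons, mgen_take, List.take_take]
      have h2 : min (m + 2 - 2) (3 * ((m + 2) / 3)) = m := by omega
      rw [h2]
      rfl
  · -- offset 2 within a block: i = 1, u starts with [q]
    have h3' : s.length % 3 = 2 := by omega
    rw [h3'] at hu hL
    obtain ⟨x, t1, hxt⟩ : ∃ x t1, t0 = x :: t1 := by
      rcases hte : t0 with _ | ⟨x, t1⟩
      · rw [hte] at hL; simp at hL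
      · exact ⟨x, t1, rfl⟩
    have hsuf : x :: t1 <:+ h := by rw [← hxt]; exact ht0suf
    have ht1 : 3 * t1.length + 3 = 3 * t0.length := by rw [hxt, List.length_cons]; omega
    obtain ⟨m, rfl⟩ : ∃ m, n = m + 2 := ⟨n - 2, by omega⟩
    refine ⟨1, t1.take ((m + 2 + 1) / 3),
      ((List.take_prefix _ _).isInfix.trans ((List.suffix_cons x t1).trans hsuf).isInfix),
      by omega, ?_, ?_⟩
    · rw [List.length_take]; omega
    · rw [hu, hxt, mgen_cons]
      have hd : (x :: p :: q :: mgen p q t1).drop 2 = q :: mgen p q t1 := rfl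
      rw [hd, List.take_succ_cons, mgen_take, List.take_take]
      have h2 : min (m + 2 - 1) (3 * ((m + 2 + 1) / 3)) = m + 1 := by omega
      rw [h2]
      rfl

lemma RepW.exists_of_inS {u : List (Fin 2)} {n : ℕ} (hu : InS u) (hlen : u.length = n)
    (hn : 2 ≤ n) :
    ∃ p q i v, ((p = 0 ∧ q = 1) ∨ (p = 1 ∧ q = 0)) ∧ InS v ∧ RepW p q i v n u := by
  obtain ⟨g, hg, hinf⟩ := InS_iff_infix_pure.mp hu
  have hglen := hinf.length_le
  rcases hg with _ | ⟨h, hh⟩ | ⟨h, hh⟩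
  · simp at hglen; omega
  · obtain ⟨i, v, hvinf, hrep⟩ := exists_rep_of_infix_mgen hlen hn hinf
    exact ⟨0, 1, i, v, Or.inl ⟨rfl, rfl⟩, InS.factor _ _ hh.inS hvinf, hrep⟩
  · obtain ⟨i, v, hvinf, hrep⟩ := exists_rep_of_infix_mgen hlen hn hinf
    exact ⟨1, 0, i, v, Or.inr ⟨rfl, rfl⟩, InS.factor _ _ hh.inS hvinf, hrep⟩

lemma RepW.forced1 {p q : Fin 2} {i n : ℕ} {v u : List (Fin 2)}
    (h : RepW p q i v n u) {j : ℕ} (hij : i ≤ j) (hjn : j < n) (hr : (j - i) % 3 = 1) :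
    u[j]? = some p := by
  rw [h.getElem hij hjn, if_neg (by omega), if_pos hr]

lemma RepW.forced2 {p q : Fin 2} {i n : ℕ} {v u : List (Fin 2)}
    (h : RepW p q i v n u) {j : ℕ} (hij : i ≤ j) (hjn : j < n) (hr : (j - i) % 3 = 2) :
    u[j]? = some q := by
  rw [h.getElem hij hjn, if_neg (by omega), if_neg (by omega)]

lemma infix_triple_of_getElem? {w : List (Fin 2)} {a : Fin 2} (h0 : w[0]? = some a)
    (h1 : w[1]? = some a) (h2 : w[2]? = some a) : [a, a, a] <:+: w := by
  rcases w with _ | ⟨b0, _ | ⟨b1, _ | ⟨b2, r⟩⟩⟩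
  · simp at h0
  · simp at h1
  · simp at h2
  · simp only [List.getElem?_cons_zero, List.getElem?_cons_succ, Option.some.injEq] at h0 h1 h2
    subst h0 h1 h2
    exact ⟨[], r, rfl⟩

lemma RepW.disjoint {p q p' q' : Fin 2} {i i' n : ℕ} {v v' u : List (Fin 2)}
    (hpq : (p = 0 ∧ q = 1) ∨ (p = 1 ∧ q = 0))
    (hpq' : (p' = 0 ∧ q' = 1) ∨ (p' = 1 ∧ q' = 0))
    (h : RepW p q i v n u) (h' : RepW p' q' i' v' n u)
    (hv : InS v) (hv' : InS v') (hn : 8 ≤ n)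
    (hne : ¬ (p = p' ∧ i = i')) : False := by
  have hi := h.1
  have hi' := h'.1
  rcases hpq with ⟨rfl, rfl⟩ | ⟨rfl, rfl⟩ <;>
    rcases hpq' with ⟨rfl, rfl⟩ | ⟨rfl, rfl⟩
  · interval_cases i <;> interval_cases i'
    · exact hne ⟨rfl, rfl⟩
    · have e1 := h.forced2 (j := 5) (by omega) (by omega) (by norm_num)
      have e2 := h'.forced1 (j := 5) (by omega) (by omega) (by norm_num)
      rw [e1] at e2
      exact absurd e2 (by decide)
    · have e1 := h.forced1 (j := 4) (by omega) (by omega) (by norm_num)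
      have e2 := h'.forced2 (j := 4) (by omega) (by omega) (by norm_num)
      rw [e1] at e2
      exact absurd e2 (by decide)
    · have e1 := h.forced1 (j := 5) (by omega) (by omega) (by norm_num)
      have e2 := h'.forced2 (j := 5) (by omega) (by omega) (by norm_num)
      rw [e1] at e2
      exact absurd e2 (by decide)
    · exact hne ⟨rfl, rfl⟩
    · have e1 := h.forced2 (j := 3) (by omega) (by omega) (by norm_num)
      have e2 := h'.forced1 (j := 3) (by omega) (by omega) (by norm_num)
      rw [e1] at e2
      exact absurd e2 (by decide)
    · have e1 := h.forced2 (j := 4) (by omega) (by omega) (by norm_num)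
      have e2 := h'.forced1 (j := 4) (by omega) (by omega) (by norm_num)
      rw [e1] at e2
      exact absurd e2 (by decide)
    · have e1 := h.forced1 (j := 3) (by omega) (by omega) (by norm_num)
      have e2 := h'.forced2 (j := 3) (by omega) (by omega) (by norm_num)
      rw [e1] at e2
      exact absurd e2 (by decide)
    · exact hne ⟨rfl, rfl⟩
  · interval_cases i <;> interval_cases i'
    · have e1 := h.forced1 (j := 4) (by omega) (by omega) (by norm_num)
      have e2 := h'.forced1 (j := 4) (by omega) (by omega) (by norm_num)
      rw [e1] at e2
      exact absurd e2 (by decide)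
    · have l0 := h.letter (k := 0) (by rw [h.2.1]; omega) (by omega)
      have l1 := h.letter (k := 1) (by rw [h.2.1]; omega) (by omega)
      have l2 := h.letter (k := 2) (by rw [h.2.1]; omega) (by omega)
      norm_num at l0 l1 l2
      have e0 : u[0]? = some 0 := by
        have := h'.getElem_low (j := 0) (by omega)
        simpa [stail] using this
      have e1 : u[3]? = some 0 := h'.forced2 (j := 3) (by omega) (by omega) (by norm_num)
      have e2 : u[6]? = some 0 := h'.forced2 (j := 6) (by omega) (by omega) (by norm_num)
      rw [l0] at e0; rw [l1] at e1; rw [l2] at e2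
      exact InS_no_triple (InS.factor _ _ hv (infix_triple_of_getElem? e0 e1 e2)) 0 (List.infix_refl _)
    · have l0 := h.letter (k := 0) (by rw [h.2.1]; omega) (by omega)
      have l1 := h.letter (k := 1) (by rw [h.2.1]; omega) (by omega)
      have l2 := h.letter (k := 2) (by rw [h.2.1]; omega) (by omega)
      norm_num at l0 l1 l2
      have e0 : u[0]? = some 1 := by
        have := h'.getElem_low (j := 0) (by omega)
        simpa [stail] using this
      have e1 : u[3]? = some 1 := h'.forced1 (j := 3) (by omega) (by omega) (by norm_num)
      have e2 : u[6]? = some 1 := h'.forced1 (j := 6) (by omega) (by omega) (by norm_num)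
      rw [l0] at e0; rw [l1] at e1; rw [l2] at e2
      exact InS_no_triple (InS.factor _ _ hv (infix_triple_of_getElem? e0 e1 e2)) 1 (List.infix_refl _)
    · have l0 := h.letter (k := 0) (by rw [h.2.1]; omega) (by omega)
      have l1 := h.letter (k := 1) (by rw [h.2.1]; omega) (by omega)
      have l2 := h.letter (k := 2) (by rw [h.2.1]; omega) (by omega)
      norm_num at l0 l1 l2
      have e0 : u[1]? = some 1 := h'.forced1 (j := 1) (by omega) (by omega) (by norm_num)
      have e1 : u[4]? = some 1 := h'.forced1 (j := 4) (by omega) (by omega) (by norm_num)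
      have e2 : u[7]? = some 1 := h'.forced1 (j := 7) (by omega) (by omega) (by norm_num)
      rw [l0] at e0; rw [l1] at e1; rw [l2] at e2
      exact InS_no_triple (InS.factor _ _ hv (infix_triple_of_getElem? e0 e1 e2)) 1 (List.infix_refl _)
    · have e1 := h.forced2 (j := 3) (by omega) (by omega) (by norm_num)
      have e2 := h'.forced2 (j := 3) (by omega) (by omega) (by norm_num)
      rw [e1] at e2
      exact absurd e2 (by decide)
    · have l0 := h.letter (k := 0) (by rw [h.2.1]; omega) (by omega)
      have l1 := h.letter (k := 1) (by rw [h.2.1]; omega) (by omega)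
      have l2 := h.letter (k := 2) (by rw [h.2.1]; omega) (by omega)
      norm_num at l0 l1 l2
      have e0 : u[1]? = some 0 := by
        have := h'.getElem_low (j := 1) (by omega)
        simpa [stail] using this
      have e1 : u[4]? = some 0 := h'.forced2 (j := 4) (by omega) (by omega) (by norm_num)
      have e2 : u[7]? = some 0 := h'.forced2 (j := 7) (by omega) (by omega) (by norm_num)
      rw [l0] at e0; rw [l1] at e1; rw [l2] at e2
      exact InS_no_triple (InS.factor _ _ hv (infix_triple_of_getElem? e0 e1 e2)) 0 (List.infix_refl _)
    · have l0 := h'.letter (k := 0) (by rw [h'.2.1]; omega) (by omega)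
      have l1 := h'.letter (k := 1) (by rw [h'.2.1]; omega) (by omega)
      have l2 := h'.letter (k := 2) (by rw [h'.2.1]; omega) (by omega)
      norm_num at l0 l1 l2
      have e0 : u[0]? = some 0 := by
        have := h.getElem_low (j := 0) (by omega)
        simpa [stail] using this
      have e1 : u[3]? = some 0 := h.forced1 (j := 3) (by omega) (by omega) (by norm_num)
      have e2 : u[6]? = some 0 := h.forced1 (j := 6) (by omega) (by omega) (by norm_num)
      rw [l0] at e0; rw [l1] at e1; rw [l2] at e2
      exact InS_no_triple (InS.factor _ _ hv' (infix_triple_of_getElem? e0 e1 e2)) 0 (List.infix_refl _)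
    · have l0 := h'.letter (k := 0) (by rw [h'.2.1]; omega) (by omega)
      have l1 := h'.letter (k := 1) (by rw [h'.2.1]; omega) (by omega)
      have l2 := h'.letter (k := 2) (by rw [h'.2.1]; omega) (by omega)
      norm_num at l0 l1 l2
      have e0 : u[1]? = some 1 := by
        have := h.getElem_low (j := 1) (by omega)
        simpa [stail] using this
      have e1 : u[4]? = some 1 := h.forced2 (j := 4) (by omega) (by omega) (by norm_num)
      have e2 : u[7]? = some 1 := h.forced2 (j := 7) (by omega) (by omega) (by norm_num)
      rw [l0] at e0; rw [l1] at e1; rw [l2] at e2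
      exact InS_no_triple (InS.factor _ _ hv' (infix_triple_of_getElem? e0 e1 e2)) 1 (List.infix_refl _)
    · have e1 := h.forced1 (j := 3) (by omega) (by omega) (by norm_num)
      have e2 := h'.forced1 (j := 3) (by omega) (by omega) (by norm_num)
      rw [e1] at e2
      exact absurd e2 (by decide)
  · interval_cases i <;> interval_cases i'
    · have e1 := h.forced1 (j := 4) (by omega) (by omega) (by norm_num)
      have e2 := h'.forced1 (j := 4) (by omega) (by omega) (by norm_num)
      rw [e1] at e2
      exact absurd e2 (by decide)
    · have l0 := h.letter (k := 0) (by rw [h.2.1]; omega) (by omega)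
      have l1 := h.letter (k := 1) (by rw [h.2.1]; omega) (by omega)
      have l2 := h.letter (k := 2) (by rw [h.2.1]; omega) (by omega)
      norm_num at l0 l1 l2
      have e0 : u[0]? = some 1 := by
        have := h'.getElem_low (j := 0) (by omega)
        simpa [stail] using this
      have e1 : u[3]? = some 1 := h'.forced2 (j := 3) (by omega) (by omega) (by norm_num)
      have e2 : u[6]? = some 1 := h'.forced2 (j := 6) (by omega) (by omega) (by norm_num)
      rw [l0] at e0; rw [l1] at e1; rw [l2] at e2
      exact InS_no_triple (InS.factor _ _ hv (infix_triple_of_getElem? e0 e1 e2)) 1 (List.infix_refl _)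
    · have l0 := h.letter (k := 0) (by rw [h.2.1]; omega) (by omega)
      have l1 := h.letter (k := 1) (by rw [h.2.1]; omega) (by omega)
      have l2 := h.letter (k := 2) (by rw [h.2.1]; omega) (by omega)
      norm_num at l0 l1 l2
      have e0 : u[0]? = some 0 := by
        have := h'.getElem_low (j := 0) (by omega)
        simpa [stail] using this
      have e1 : u[3]? = some 0 := h'.forced1 (j := 3) (by omega) (by omega) (by norm_num)
      have e2 : u[6]? = some 0 := h'.forced1 (j := 6) (by omega) (by omega) (by norm_num)
      rw [l0] at e0; rw [l1] at e1; rw [l2] at e2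
      exact InS_no_triple (InS.factor _ _ hv (infix_triple_of_getElem? e0 e1 e2)) 0 (List.infix_refl _)
    · have l0 := h.letter (k := 0) (by rw [h.2.1]; omega) (by omega)
      have l1 := h.letter (k := 1) (by rw [h.2.1]; omega) (by omega)
      have l2 := h.letter (k := 2) (by rw [h.2.1]; omega) (by omega)
      norm_num at l0 l1 l2
      have e0 : u[1]? = some 0 := h'.forced1 (j := 1) (by omega) (by omega) (by norm_num)
      have e1 : u[4]? = some 0 := h'.forced1 (j := 4) (by omega) (by omega) (by norm_num)
      have e2 : u[7]? = some 0 := h'.forced1 (j := 7) (by omega) (by omega) (by norm_num)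
      rw [l0] at e0; rw [l1] at e1; rw [l2] at e2
      exact InS_no_triple (InS.factor _ _ hv (infix_triple_of_getElem? e0 e1 e2)) 0 (List.infix_refl _)
    · have e1 := h.forced2 (j := 3) (by omega) (by omega) (by norm_num)
      have e2 := h'.forced2 (j := 3) (by omega) (by omega) (by norm_num)
      rw [e1] at e2
      exact absurd e2 (by decide)
    · have l0 := h.letter (k := 0) (by rw [h.2.1]; omega) (by omega)
      have l1 := h.letter (k := 1) (by rw [h.2.1]; omega) (by omega)
      have l2 := h.letter (k := 2) (by rw [h.2.1]; omega) (by omega)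
      norm_num at l0 l1 l2
      have e0 : u[1]? = some 1 := by
        have := h'.getElem_low (j := 1) (by omega)
        simpa [stail] using this
      have e1 : u[4]? = some 1 := h'.forced2 (j := 4) (by omega) (by omega) (by norm_num)
      have e2 : u[7]? = some 1 := h'.forced2 (j := 7) (by omega) (by omega) (by norm_num)
      rw [l0] at e0; rw [l1] at e1; rw [l2] at e2
      exact InS_no_triple (InS.factor _ _ hv (infix_triple_of_getElem? e0 e1 e2)) 1 (List.infix_refl _)
    · have l0 := h'.letter (k := 0) (by rw [h'.2.1]; omega) (by omega)
      have l1 := h'.letter (k := 1) (by rw [h'.2.1]; omega) (by omega)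
      have l2 := h'.letter (k := 2) (by rw [h'.2.1]; omega) (by omega)
      norm_num at l0 l1 l2
      have e0 : u[0]? = some 1 := by
        have := h.getElem_low (j := 0) (by omega)
        simpa [stail] using this
      have e1 : u[3]? = some 1 := h.forced1 (j := 3) (by omega) (by omega) (by norm_num)
      have e2 : u[6]? = some 1 := h.forced1 (j := 6) (by omega) (by omega) (by norm_num)
      rw [l0] at e0; rw [l1] at e1; rw [l2] at e2
      exact InS_no_triple (InS.factor _ _ hv' (infix_triple_of_getElem? e0 e1 e2)) 1 (List.infix_refl _)
    · have l0 := h'.letter (k := 0) (by rw [h'.2.1]; omega) (by omega)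
      have l1 := h'.letter (k := 1) (by rw [h'.2.1]; omega) (by omega)
      have l2 := h'.letter (k := 2) (by rw [h'.2.1]; omega) (by omega)
      norm_num at l0 l1 l2
      have e0 : u[1]? = some 0 := by
        have := h.getElem_low (j := 1) (by omega)
        simpa [stail] using this
      have e1 : u[4]? = some 0 := h.forced2 (j := 4) (by omega) (by omega) (by norm_num)
      have e2 : u[7]? = some 0 := h.forced2 (j := 7) (by omega) (by omega) (by norm_num)
      rw [l0] at e0; rw [l1] at e1; rw [l2] at e2
      exact InS_no_triple (InS.factor _ _ hv' (infix_triple_of_getElem? e0 e1 e2)) 0 (List.infix_refl _)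
    · have e1 := h.forced1 (j := 3) (by omega) (by omega) (by norm_num)
      have e2 := h'.forced1 (j := 3) (by omega) (by omega) (by norm_num)
      rw [e1] at e2
      exact absurd e2 (by decide)
  · interval_cases i <;> interval_cases i'
    · exact hne ⟨rfl, rfl⟩
    · have e1 := h.forced2 (j := 5) (by omega) (by omega) (by norm_num)
      have e2 := h'.forced1 (j := 5) (by omega) (by omega) (by norm_num)
      rw [e1] at e2
      exact absurd e2 (by decide)
    · have e1 := h.forced1 (j := 4) (by omega) (by omega) (by norm_num)
      have e2 := h'.forced2 (j := 4) (by omega) (by omega) (by norm_num)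
      rw [e1] at e2
      exact absurd e2 (by decide)
    · have e1 := h.forced1 (j := 5) (by omega) (by omega) (by norm_num)
      have e2 := h'.forced2 (j := 5) (by omega) (by omega) (by norm_num)
      rw [e1] at e2
      exact absurd e2 (by decide)
    · exact hne ⟨rfl, rfl⟩
    · have e1 := h.forced2 (j := 3) (by omega) (by omega) (by norm_num)
      have e2 := h'.forced1 (j := 3) (by omega) (by omega) (by norm_num)
      rw [e1] at e2
      exact absurd e2 (by decide)
    · have e1 := h.forced2 (j := 4) (by omega) (by omega) (by norm_num)
      have e2 := h'.forced1 (j := 4) (by omega) (by omega) (by norm_num)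
      rw [e1] at e2
      exact absurd e2 (by decide)
    · have e1 := h.forced1 (j := 3) (by omega) (by omega) (by norm_num)
      have e2 := h'.forced2 (j := 3) (by omega) (by omega) (by norm_num)
      rw [e1] at e2
      exact absurd e2 (by decide)
    · exact hne ⟨rfl, rfl⟩

/-- the set counted by `c`. -/
def CS (n : ℕ) : Set (List (Fin 2)) := {u | InS u ∧ u.length = n}

lemma CS_finite (n : ℕ) : (CS n).Finite :=
  (List.finite_length_eq (Fin 2) n).subset (fun _ hu => hu.2)

/-- the set of length-`n` words arising from offset `i` of morphism `mgen p q`. -/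
def FA (p q : Fin 2) (i n : ℕ) : Set (List (Fin 2)) :=
  (fun v => stail p q i ++ (mgen p q v).take (n - i)) '' (CS ((n + 2 - i) / 3))

lemma mem_FA {p q : Fin 2} {i n : ℕ} {u : List (Fin 2)} (hi : i ≤ 2) :
    u ∈ FA p q i n ↔ ∃ v, InS v ∧ RepW p q i v n u := by
  constructor
  · rintro ⟨v, ⟨hv, hlen⟩, rfl⟩
    exact ⟨v, hv, hi, hlen, rfl⟩
  · rintro ⟨v, hv, _, hlen, rfl⟩
    exact ⟨v, ⟨hv, hlen⟩, rfl⟩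

lemma FA_finite (p q : Fin 2) (i n : ℕ) : (FA p q i n).Finite :=
  ((CS_finite _).image _)

lemma FA_subset {p q : Fin 2} {i n : ℕ} (hpq : (p = 0 ∧ q = 1) ∨ (p = 1 ∧ q = 0))
    (hi : i ≤ 2) (hn : 2 ≤ n) : FA p q i n ⊆ CS n := by
  intro u hu
  obtain ⟨v, hv, hrep⟩ := (mem_FA hi).mp hu
  exact ⟨hrep.inS hpq hv hn, hrep.length hn⟩

lemma CS_union (n : ℕ) (hn : 2 ≤ n) :
    CS n = FA 0 1 0 n ∪ (FA 0 1 1 n ∪ (FA 0 1 2 n ∪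
      (FA 1 0 0 n ∪ (FA 1 0 1 n ∪ FA 1 0 2 n)))) := by
  apply Set.Subset.antisymm
  · intro u hu
    obtain ⟨p, q, i, v, hpq, hv, hrep⟩ := RepW.exists_of_inS hu.1 hu.2 hn
    have hi := hrep.1
    have hmem : u ∈ FA p q i n := (mem_FA hi).mpr ⟨v, hv, hrep⟩
    rcases hpq with ⟨rfl, rfl⟩ | ⟨rfl, rfl⟩ <;> interval_cases i <;> simp_all
    all_goals tauto
  · intro u hu
    rcases hu with h | h | h | h | h | h
    · exact FA_subset (Or.inl ⟨rfl, rfl⟩) (by omega) hn h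
    · exact FA_subset (Or.inl ⟨rfl, rfl⟩) (by omega) hn h
    · exact FA_subset (Or.inl ⟨rfl, rfl⟩) (by omega) hn h
    · exact FA_subset (Or.inr ⟨rfl, rfl⟩) (by omega) hn h
    · exact FA_subset (Or.inr ⟨rfl, rfl⟩) (by omega) hn h
    · exact FA_subset (Or.inr ⟨rfl, rfl⟩) (by omega) hn h

lemma FA_ncard {p q : Fin 2} {i n : ℕ} (hi : i ≤ 2) (hn : 2 ≤ n) :
    (FA p q i n).ncard = c ((n + 2 - i) / 3) := by
  have : c ((n + 2 - i) / 3) = (CS ((n + 2 - i) / 3)).ncard := rfl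
  rw [this, FA]
  apply Set.ncard_image_of_injOn
  intro v hv v' hv' he
  have r1 : RepW p q i v n (stail p q i ++ (mgen p q v).take (n - i)) := ⟨hi, hv.2, rfl⟩
  have he' : stail p q i ++ (mgen p q v).take (n - i)
      = stail p q i ++ (mgen p q v').take (n - i) := he
  have r2 : RepW p q i v' n (stail p q i ++ (mgen p q v).take (n - i)) := ⟨hi, hv'.2, he'⟩
  exact r1.inj r2 hn

lemma FA_disjoint {p q p' q' : Fin 2} {i i' n : ℕ}
    (hpq : (p = 0 ∧ q = 1) ∨ (p = 1 ∧ q = 0))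
    (hpq' : (p' = 0 ∧ q' = 1) ∨ (p' = 1 ∧ q' = 0))
    (hi : i ≤ 2) (hi' : i' ≤ 2) (hn : 8 ≤ n) (hne : ¬ (p = p' ∧ i = i')) :
    Disjoint (FA p q i n) (FA p' q' i' n) := by
  rw [Set.disjoint_left]
  intro u hu hu'
  obtain ⟨v, hv, hrep⟩ := (mem_FA hi).mp hu
  obtain ⟨v', hv', hrep'⟩ := (mem_FA hi').mp hu'
  exact hrep.disjoint hpq hpq' hrep' hv hv' hn hne

theorem c_recurrence (n : ℕ) (hn : 8 ≤ n) :
    c n = 2 * (c ((n + 2) / 3) + c ((n + 1) / 3) + c (n / 3)) := by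
  have hn2 : 2 ≤ n := by omega
  have key : c n = (CS n).ncard := rfl
  have dA : ∀ (p q p' q' : Fin 2) (i i' : ℕ), ((p = 0 ∧ q = 1) ∨ (p = 1 ∧ q = 0)) →
      ((p' = 0 ∧ q' = 1) ∨ (p' = 1 ∧ q' = 0)) → i ≤ 2 → i' ≤ 2 → ¬ (p = p' ∧ i = i') →
      Disjoint (FA p q i n) (FA p' q' i' n) := fun _ _ _ _ _ _ a b hi hi' hne =>
    FA_disjoint a b hi hi' hn hne
  have hA : ∀ (p q : Fin 2) (i : ℕ), (FA p q i n).Finite := fun p q i => FA_finite p q i n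
  have d5 : Disjoint (FA 1 0 1 n) (FA 1 0 2 n) :=
    dA 1 0 1 0 1 2 (by simp) (by simp) (by omega) (by omega) (by simp)
  have d4 : Disjoint (FA 1 0 0 n) (FA 1 0 1 n ∪ FA 1 0 2 n) :=
    Set.disjoint_union_right.mpr
      ⟨dA 1 0 1 0 0 1 (by simp) (by simp) (by omega) (by omega) (by simp),
       dA 1 0 1 0 0 2 (by simp) (by simp) (by omega) (by omega) (by simp)⟩
  have d3 : Disjoint (FA 0 1 2 n) (FA 1 0 0 n ∪ (FA 1 0 1 n ∪ FA 1 0 2 n)) :=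
    Set.disjoint_union_right.mpr
      ⟨dA 0 1 1 0 2 0 (by simp) (by simp) (by omega) (by omega) (by simp),
       Set.disjoint_union_right.mpr
        ⟨dA 0 1 1 0 2 1 (by simp) (by simp) (by omega) (by omega) (by simp),
         dA 0 1 1 0 2 2 (by simp) (by simp) (by omega) (by omega) (by simp)⟩⟩
  have d2 : Disjoint (FA 0 1 1 n) (FA 0 1 2 n ∪ (FA 1 0 0 n ∪ (FA 1 0 1 n ∪ FA 1 0 2 n))) :=
    Set.disjoint_union_right.mpr
      ⟨dA 0 1 0 1 1 2 (by simp) (by simp) (by omega) (by omega) (by simp),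
       Set.disjoint_union_right.mpr
        ⟨dA 0 1 1 0 1 0 (by simp) (by simp) (by omega) (by omega) (by simp),
         Set.disjoint_union_right.mpr
          ⟨dA 0 1 1 0 1 1 (by simp) (by simp) (by omega) (by omega) (by simp),
           dA 0 1 1 0 1 2 (by simp) (by simp) (by omega) (by omega) (by simp)⟩⟩⟩
  have d1 : Disjoint (FA 0 1 0 n)
      (FA 0 1 1 n ∪ (FA 0 1 2 n ∪ (FA 1 0 0 n ∪ (FA 1 0 1 n ∪ FA 1 0 2 n)))) :=
    Set.disjoint_union_right.mpr
      ⟨dA 0 1 0 1 0 1 (by simp) (by simp) (by omega) (by omega) (by simp),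
       Set.disjoint_union_right.mpr
        ⟨dA 0 1 0 1 0 2 (by simp) (by simp) (by omega) (by omega) (by simp),
         Set.disjoint_union_right.mpr
          ⟨dA 0 1 1 0 0 0 (by simp) (by simp) (by omega) (by omega) (by simp),
           Set.disjoint_union_right.mpr
            ⟨dA 0 1 1 0 0 1 (by simp) (by simp) (by omega) (by omega) (by simp),
             dA 0 1 1 0 0 2 (by simp) (by simp) (by omega) (by omega) (by simp)⟩⟩⟩⟩
  rw [key, CS_union n hn2,
    Set.ncard_union_eq d1 (hA 0 1 0) ((hA 0 1 1).union ((hA 0 1 2).union ((hA 1 0 0).union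
      ((hA 1 0 1).union (hA 1 0 2))))),
    Set.ncard_union_eq d2 (hA 0 1 1) ((hA 0 1 2).union ((hA 1 0 0).union
      ((hA 1 0 1).union (hA 1 0 2)))),
    Set.ncard_union_eq d3 (hA 0 1 2) ((hA 1 0 0).union ((hA 1 0 1).union (hA 1 0 2))),
    Set.ncard_union_eq d4 (hA 1 0 0) ((hA 1 0 1).union (hA 1 0 2)),
    Set.ncard_union_eq d5 (hA 1 0 1) (hA 1 0 2),
    FA_ncard (by omega : (0:ℕ) ≤ 2) hn2, FA_ncard (by omega : (1:ℕ) ≤ 2) hn2,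
    FA_ncard (by omega : (2:ℕ) ≤ 2) hn2, FA_ncard (by omega : (0:ℕ) ≤ 2) hn2,
    FA_ncard (by omega : (1:ℕ) ≤ 2) hn2, FA_ncard (by omega : (2:ℕ) ≤ 2) hn2]
  have h0 : (n + 2 - 0) / 3 = (n + 2) / 3 := by omega
  have h1 : (n + 2 - 1) / 3 = (n + 1) / 3 := by omega
  have h2 : (n + 2 - 2) / 3 = n / 3 := by omega
  rw [h0, h1, h2]
  ring

noncomputable def alp : ℝ := 1 + Real.log 2 / Real.log 3

lemma log3_pos : (0:ℝ) < Real.log 3 := Real.log_pos (by norm_num)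

lemma alp_eq : alp = Real.log 6 / Real.log 3 := by
  have h6 : (6:ℝ) = 2 * 3 := by norm_num
  rw [alp, h6, Real.log_mul (by norm_num) (by norm_num)]
  field_simp
  ring

lemma alp_pos : 0 < alp := by
  have h2 : (0:ℝ) < Real.log 2 := Real.log_pos (by norm_num)
  have : 0 < Real.log 2 / Real.log 3 := div_pos h2 log3_pos
  rw [alp]; linarith

lemma rpow_3_alp : (3:ℝ) ^ alp = 6 := by
  rw [alp_eq, Real.rpow_def_of_pos (by norm_num : (0:ℝ) < 3)]
  rw [mul_comm, div_mul_cancel₀ _ (ne_of_gt log3_pos)]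
  exact Real.exp_log (by norm_num)

lemma c_ge_one (n : ℕ) : 1 ≤ c n := by
  obtain ⟨u, hu, hlen⟩ := InS_exists_length n
  have hne : (CS n).Nonempty := ⟨u, hu, hlen⟩
  have h := (Set.ncard_pos (CS_finite n)).mpr hne
  have hc : c n = (CS n).ncard := rfl
  omega

lemma cast_div3 (m : ℕ) : ((m / 3 : ℕ) : ℝ) ≤ (m : ℝ) / 3 := by
  have h : 3 * (m / 3) ≤ m := by omega
  have h' : (3:ℝ) * ((m / 3 : ℕ) : ℝ) ≤ (m : ℝ) := by exact_mod_cast h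
  linarith

lemma cast_div3' (m : ℕ) : ((m : ℝ) - 2) / 3 ≤ ((m / 3 : ℕ) : ℝ) := by
  have h : m ≤ 3 * (m / 3) + 2 := by omega
  have h' : (m : ℝ) ≤ 3 * ((m / 3 : ℕ) : ℝ) + 2 := by exact_mod_cast h
  linarith

/-- the upper constant -/
noncomputable def Cu : ℕ := c 1 + c 2 + c 3 + c 4 + c 5 + c 6 + c 7 + 1

lemma div_rpow_alp (x : ℝ) (hx : 0 ≤ x) : (x / 3) ^ alp = x ^ alp / 6 := by
  rw [Real.div_rpow hx (by norm_num : (0:ℝ) ≤ 3), rpow_3_alp]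

lemma c_upper : ∀ k, 2 ≤ k → (c k : ℝ) ≤ (Cu : ℝ) * ((k : ℝ) - 1) ^ alp := by
  intro k
  induction k using Nat.strong_induction_on with
  | _ k ih =>
    intro hk2
    have hCu0 : (0:ℝ) ≤ (Cu : ℝ) := Nat.cast_nonneg _
    have hbase1 : (1:ℝ) ≤ ((k:ℝ) - 1) := by
      have : (2:ℝ) ≤ (k:ℝ) := by exact_mod_cast hk2
      linarith
    have hone : (1:ℝ) ≤ ((k:ℝ) - 1) ^ alp := Real.one_le_rpow hbase1 (le_of_lt alp_pos)
    by_cases hk8 : k < 8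
    · have hck : c k ≤ Cu := by
        interval_cases k <;> · unfold Cu; omega
      calc (c k : ℝ) ≤ (Cu : ℝ) := by exact_mod_cast hck
        _ = (Cu : ℝ) * 1 := by ring
        _ ≤ (Cu : ℝ) * ((k:ℝ) - 1) ^ alp := mul_le_mul_of_nonneg_left hone hCu0
    · push_neg at hk8
      rw [c_recurrence k hk8]
      have key : ∀ m : ℕ, 2 ≤ m → m < k → (m : ℝ) ≤ ((k : ℝ) + 2) / 3 →
          (c m : ℝ) ≤ (Cu : ℝ) * (((k:ℝ) - 1) / 3) ^ alp := by
        intro m hm2 hmk hmle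
        have h1 := ih m hmk hm2
        have h2 : ((m:ℝ) - 1) ≤ ((k:ℝ) - 1) / 3 := by linarith
        have h3 : (0:ℝ) ≤ (m:ℝ) - 1 := by
          have : (2:ℝ) ≤ (m:ℝ) := by exact_mod_cast hm2
          linarith
        calc (c m : ℝ) ≤ (Cu : ℝ) * ((m:ℝ) - 1) ^ alp := h1
          _ ≤ (Cu : ℝ) * (((k:ℝ) - 1) / 3) ^ alp :=
            mul_le_mul_of_nonneg_left (Real.rpow_le_rpow h3 h2 (le_of_lt alp_pos)) hCu0
      have hc1 : ((k + 2 : ℕ) : ℝ) / 3 ≤ ((k : ℝ) + 2) / 3 := by push_cast; linarith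
      have ha := key ((k + 2) / 3) (by omega) (by omega) ((cast_div3 (k + 2)).trans hc1)
      have hc2 : ((k + 1 : ℕ) : ℝ) / 3 ≤ ((k : ℝ) + 2) / 3 := by push_cast; linarith
      have hb := key ((k + 1) / 3) (by omega) (by omega) ((cast_div3 (k + 1)).trans hc2)
      have hc3 : ((k : ℕ) : ℝ) / 3 ≤ ((k : ℝ) + 2) / 3 := by push_cast; linarith
      have hd := key (k / 3) (by omega) (by omega) ((cast_div3 k).trans hc3)
      have hk1 : (0:ℝ) ≤ (k:ℝ) - 1 := by linarith
      push_cast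
      rw [div_rpow_alp _ hk1] at ha hb hd
      linarith

lemma Cu_pos : 0 < Cu := by unfold Cu; omega

/-- the lower constant -/
noncomputable def Cl : ℝ := ((9:ℝ) ^ alp)⁻¹

lemma Cl_pos : 0 < Cl := by
  apply inv_pos.mpr
  exact Real.rpow_pos_of_pos (by norm_num) _

lemma c_lower : ∀ k : ℕ, 1 ≤ k → Cl * ((k : ℝ) + 1) ^ alp ≤ (c k : ℝ) := by
  intro k
  induction k using Nat.strong_induction_on with
  | _ k ih =>
    intro hk1
    by_cases hk8 : k < 8
    · have h9 : ((k : ℝ) + 1) ^ alp ≤ (9:ℝ) ^ alp := by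
        apply Real.rpow_le_rpow (by positivity) ?_ (le_of_lt alp_pos)
        have h7 : k ≤ 7 := by omega
        have : (k : ℝ) ≤ 7 := by exact_mod_cast h7
        linarith
      have h1 : Cl * ((k : ℝ) + 1) ^ alp ≤ 1 := by
        rw [Cl]
        rw [inv_mul_le_iff₀ (Real.rpow_pos_of_pos (by norm_num) _)]
        simpa using h9
      have h2 : (1:ℝ) ≤ (c k : ℝ) := by exact_mod_cast c_ge_one k
      linarith
    · push_neg at hk8
      rw [c_recurrence k hk8]
      have hClpos := le_of_lt Cl_pos
      have key : ∀ m : ℕ, 1 ≤ m → m < k → ((k : ℝ) - 2) / 3 ≤ (m : ℝ) →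
          Cl * (((k:ℝ) + 1) / 3) ^ alp ≤ (c m : ℝ) := by
        intro m hm1 hmk hmge
        have h1 := ih m hmk hm1
        have h2 : ((k:ℝ) + 1) / 3 ≤ (m:ℝ) + 1 := by linarith
        have h3 : (0:ℝ) ≤ ((k:ℝ) + 1) / 3 := by positivity
        refine le_trans ?_ h1
        exact mul_le_mul_of_nonneg_left (Real.rpow_le_rpow h3 h2 (le_of_lt alp_pos)) hClpos
      have hc1 : ((k : ℝ) - 2) / 3 ≤ (((k + 2) / 3 : ℕ) : ℝ) := by
        have := cast_div3' (k + 2)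
        have hcst : ((k + 2 : ℕ) : ℝ) = (k : ℝ) + 2 := by push_cast; ring
        rw [hcst] at this
        linarith
      have ha := key ((k + 2) / 3) (by omega) (by omega) hc1
      have hc2 : ((k : ℝ) - 2) / 3 ≤ (((k + 1) / 3 : ℕ) : ℝ) := by
        have := cast_div3' (k + 1)
        have hcst : ((k + 1 : ℕ) : ℝ) = (k : ℝ) + 1 := by push_cast; ring
        rw [hcst] at this
        linarith
      have hb := key ((k + 1) / 3) (by omega) (by omega) hc2
      have hd := key (k / 3) (by omega) (by omega) (cast_div3' k)
      have hk1' : (0:ℝ) ≤ (k:ℝ) + 1 := by positivity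
      push_cast
      rw [div_rpow_alp _ hk1'] at ha hb hd
      linarith

/-- The recurrence `c(n) = 2(c(⌈n/3⌉)+c(⌈(n-1)/3⌉)+c(⌈(n-2)/3⌉))` for `n ≥ 8`, and
the consequent growth `c(n) = Θ(n^{1+ln 2/ln 3})`. -/
theorem stmt_4 :
    (∀ n : ℕ, 8 ≤ n → c n = 2 * (c ((n + 2) / 3) + c ((n + 1) / 3) + c (n / 3))) ∧
    ∃ C₁ C₂ : ℝ, 0 < C₁ ∧ 0 < C₂ ∧ ∀ n : ℕ, 1 ≤ n →
      C₁ * (n : ℝ) ^ (1 + Real.log 2 / Real.log 3) ≤ (c n : ℝ) ∧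
      (c n : ℝ) ≤ C₂ * (n : ℝ) ^ (1 + Real.log 2 / Real.log 3) := by
  refine ⟨fun n hn => c_recurrence n hn, Cl, (Cu : ℝ), Cl_pos, by exact_mod_cast Cu_pos,
    fun n hn => ⟨?_, ?_⟩⟩
  · show Cl * (n : ℝ) ^ alp ≤ (c n : ℝ)
    have h1 := c_lower n hn
    have h2 : (n : ℝ) ^ alp ≤ ((n : ℝ) + 1) ^ alp :=
      Real.rpow_le_rpow (by positivity) (by linarith) (le_of_lt alp_pos)
    have := mul_le_mul_of_nonneg_left h2 (le_of_lt Cl_pos)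
    linarith
  · show (c n : ℝ) ≤ (Cu : ℝ) * (n : ℝ) ^ alp
    rcases Nat.lt_or_ge n 2 with h2 | h2
    · have hn1 : n = 1 := by omega
      subst hn1
      have hc : c 1 ≤ Cu := by unfold Cu; omega
      have : ((1:ℕ) : ℝ) ^ alp = 1 := by
        rw [Nat.cast_one, Real.one_rpow]
      rw [this, mul_one]
      exact_mod_cast hc
    · have h1 := c_upper n h2
      have hb : (0:ℝ) ≤ (n:ℝ) - 1 := by
        have : (2:ℝ) ≤ (n:ℝ) := by exact_mod_cast h2
        linarith
      have h3 : ((n : ℝ) - 1) ^ alp ≤ (n : ℝ) ^ alp :=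
        Real.rpow_le_rpow hb (by linarith) (le_of_lt alp_pos)
      have := mul_le_mul_of_nonneg_left h3 (Nat.cast_nonneg Cu)
      linarith
end

section
/- Every recurrent infinite word over a 3-letter alphabet avoiding the formula ABCAB.ABCBA.ACB.BAC is square-free. -/
def Recurrent {α : Type*} (w : ℕ → α) : Prop :=
  ∀ u : List α, IsFactor u w → ∀ N : ℕ, ∃ i, N ≤ i ∧ OccursAt u w i

/-- An occurrence of the formula `ABCAB.ABCBA.ACB.BAC` in `w`. -/
def OccFb (w : ℕ → Fin 3) : Prop :=
  ∃ a b c : List (Fin 3), a ≠ [] ∧ b ≠ [] ∧ c ≠ [] ∧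
    IsFactor (a ++ b ++ c ++ a ++ b) w ∧
    IsFactor (a ++ b ++ c ++ b ++ a) w ∧
    IsFactor (a ++ c ++ b) w ∧
    IsFactor (b ++ a ++ c) w

lemma occursAt_append {α : Type*} {a b : List α} {w : ℕ → α} {i : ℕ}
    (ha : OccursAt a w i) (hb : OccursAt b w (i + a.length)) :
    OccursAt (a ++ b) w i := by
  intro j
  have hj := j.isLt
  simp only [List.length_append] at hj
  rcases lt_or_ge (j : ℕ) a.length with h | h
  · have := ha ⟨j, h⟩
    simp only [List.get_eq_getElem] at this ⊢
    rw [List.getElem_append_left h]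
    exact this
  · have := hb ⟨(j : ℕ) - a.length, by omega⟩
    simp only [List.get_eq_getElem] at this ⊢
    rw [List.getElem_append_right h]
    rw [← this]
    congr 1
    omega

lemma occursAt_left {α : Type*} {a b : List α} {w : ℕ → α} {i : ℕ}
    (h : OccursAt (a ++ b) w i) : OccursAt a w i := by
  intro j
  have := h ⟨j, by simp; omega⟩
  simp only [List.get_eq_getElem] at this ⊢
  rwa [List.getElem_append_left j.isLt] at this

lemma occursAt_right {α : Type*} {a b : List α} {w : ℕ → α} {i : ℕ}
    (h : OccursAt (a ++ b) w i) : OccursAt b w (i + a.length) := by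
  intro j
  have := h ⟨a.length + j, by simp⟩
  simp only [List.get_eq_getElem] at this ⊢
  rw [List.getElem_append_right (by omega)] at this
  simp only [Nat.add_sub_cancel_left] at this
  rw [add_assoc]
  exact this

lemma occursAt_ofFn {α : Type*} (w : ℕ → α) (i n : ℕ) :
    OccursAt (List.ofFn fun k : Fin n => w (i + k)) w i := by
  intro j
  simp [List.get_ofFn]

lemma occursAt_shift {α : Type*} {u : List α} {w : ℕ → α} {i i' : ℕ}
    (h : OccursAt u w i) (e : i' = i) : OccursAt u w i' := by rw [e]; exact h

/-- Every recurrent infinite ternary word avoiding `ABCAB.ABCBA.ACB.BAC`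
is square-free. -/
theorem stmt_6 (w : ℕ → Fin 3) (hrec : Recurrent w) (havoid : ¬ OccFb w) :
    ∀ u : List (Fin 3), u ≠ [] → ¬ IsFactor (u ++ u) w := by
  intro u hu hfac
  obtain ⟨i, hi⟩ := hfac
  set L := u.length with hL
  obtain ⟨j, hj, hocc⟩ := hrec (u ++ u) ⟨i, hi⟩ (i + L + L + 1)
  set n := j - (i + L + L) with hn
  have hnpos : 0 < n := by omega
  have hjeq : j = i + L + L + n := by omega
  set v : List (Fin 3) := List.ofFn (fun k : Fin n => w (i + L + L + k)) with hv
  have hvlen : v.length = n := by simp [hv]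
  have hvne : v ≠ [] := by
    intro h
    rw [h] at hvlen
    simp at hvlen
    omega
  have hocc_v : OccursAt v w (i + L + L) := occursAt_ofFn w (i + L + L) n
  have hocc1 : OccursAt u w i := occursAt_left hi
  have hocc2 : OccursAt u w (i + L) := occursAt_right hi
  have hocc3 : OccursAt u w j := occursAt_left hocc
  have hocc4 : OccursAt u w (j + L) := occursAt_right hocc
  have A2 : OccursAt ((u ++ u) ++ v) w i :=
    occursAt_append hi (occursAt_shift hocc_v (by simp [List.length_append]; omega))
  have A3 : OccursAt (((u ++ u) ++ v) ++ u) w i :=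
    occursAt_append A2 (occursAt_shift hocc3 (by simp [List.length_append, hvlen]; omega))
  have A4 : OccursAt ((((u ++ u) ++ v) ++ u) ++ u) w i :=
    occursAt_append A3 (occursAt_shift hocc4 (by simp [List.length_append, hvlen]; omega))
  have B2 : OccursAt ((u ++ v) ++ u) w (i + L) :=
    occursAt_append
      (occursAt_append hocc2 (occursAt_shift hocc_v (by omega)))
      (occursAt_shift hocc3 (by simp [List.length_append, hvlen]; omega))
  exact havoid ⟨u, u, v, hu, hu, hvne, ⟨i, A4⟩, ⟨i, A4⟩, ⟨i + L, B2⟩, ⟨i, A2⟩⟩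
end

section
/- No infinite ternary word is square-free and avoids the factor 012 together with all five other letter-permutations of 012; in fact, every infinite square-free word over {0,1,2} contains all six words obtained from 012 by permuting letters as factors. -/
def StepOK (r : List (Fin 3)) : Prop :=
  (∀ L < r.length, 1 ≤ L → 2*L ≤ r.length → r.take L ≠ (r.drop L).take L)
  ∧ r.take 3 ≠ [2,1,0]

instance : DecidablePred StepOK := fun r => by
  unfold StepOK; infer_instance

def Good : List (Fin 3) → Prop
  | [] => True
  | x :: l => StepOK (x :: l) ∧ Good l

def gen : ℕ → List (List (Fin 3))
  | 0 => [[]]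
  | n+1 => (gen n).flatMap fun l =>
      ([0,1,2] : List (Fin 3)).filterMap fun x =>
        if StepOK (x :: l) then some (x :: l) else none

lemma mem_gen : ∀ l : List (Fin 3), Good l → l ∈ gen l.length
  | [], _ => by simp [gen]
  | x :: l, ⟨hs, hg⟩ => by
      have ih := mem_gen l hg
      simp only [List.length_cons, gen, List.mem_flatMap]
      refine ⟨l, ih, ?_⟩
      rw [List.mem_filterMap]
      exact ⟨x, by fin_cases x <;> simp, by rw [if_pos hs]⟩

set_option maxRecDepth 100000 in
lemma gen30 : gen 30 = [] := by decide

def pref (v : ℕ → Fin 3) : ℕ → List (Fin 3)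
  | 0 => []
  | n+1 => v n :: pref v n

lemma pref_length (v : ℕ → Fin 3) : ∀ n, (pref v n).length = n
  | 0 => rfl
  | n+1 => by simp [pref, pref_length v n]

lemma pref_get (v : ℕ → Fin 3) :
    ∀ n k (h : k < (pref v n).length), (pref v n)[k] = v (n - 1 - k) := by
  intro n
  induction n with
  | zero => intro k h; simp [pref] at h
  | succ n ih =>
      intro k h
      cases k with
      | zero => simp [pref]
      | succ k =>
          have hk : k < (pref v n).length := by
            simp [pref_length] at h ⊢; omega
          have : (pref v (n+1))[k+1] = (pref v n)[k] := by
            simp [pref]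
          rw [this, ih k hk]
          congr 1
          omega

lemma step_pref (v : ℕ → Fin 3)
    (hsq : ∀ i L, 1 ≤ L → ¬ (∀ j < L, v (i + j) = v (i + L + j)))
    (hav : ∀ i, ¬ (v i = 0 ∧ v (i+1) = 1 ∧ v (i+2) = 2)) (n : ℕ) :
    StepOK (pref v (n+1)) := by
  have hlen : (pref v (n+1)).length = n + 1 := pref_length v (n+1)
  constructor
  · intro L _ h1 h2 heq
    have hpt : ∀ j, j < L → v (n - j) = v (n - (L + j)) := by
      intro j hj
      have hj1 : j < ((pref v (n+1)).take L).length := by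
        simp [hlen]; omega
      have hj2 : j < (((pref v (n+1)).drop L).take L).length := by
        simp [hlen]; omega
      have h3 : ((pref v (n+1)).take L)[j] = (((pref v (n+1)).drop L).take L)[j] := by
        simp only [heq]
      rw [List.getElem_take, List.getElem_take, List.getElem_drop] at h3
      rw [pref_get, pref_get] at h3
      convert h3 using 2 <;> omega
    apply hsq (n + 1 - 2*L) L h1
    intro j hj
    have h4 := hpt (L - 1 - j) (by omega)
    have e1 : n - (L - 1 - j) = n + 1 - 2*L + L + j := by omega
    have e2 : n - (L + (L - 1 - j)) = n + 1 - 2*L + j := by omega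
    rw [e1, e2] at h4
    exact h4.symm
  · intro h
    have hl3 := congrArg List.length h
    simp only [List.length_take, hlen, List.length_cons] at hl3
    have hn2 : 2 ≤ n := by simp at hl3; omega
    have g0 : (pref v (n+1))[0]'(by omega) = 2 := by
      have : ((pref v (n+1)).take 3)[0]'(by rw [h]; simp) = 2 := by simp [h]
      rwa [List.getElem_take] at this
    have g1 : (pref v (n+1))[1]'(by omega) = 1 := by
      have : ((pref v (n+1)).take 3)[1]'(by rw [h]; simp) = 1 := by simp [h]
      rwa [List.getElem_take] at this
    have g2 : (pref v (n+1))[2]'(by omega) = 0 := by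
      have : ((pref v (n+1)).take 3)[2]'(by rw [h]; simp) = 0 := by simp [h]
      rwa [List.getElem_take] at this
    rw [pref_get] at g0 g1 g2
    apply hav (n - 2)
    have e1 : n - 2 + 1 = n + 1 - 1 - 1 := by omega
    have e2 : n - 2 + 2 = n + 1 - 1 - 0 := by omega
    have e3 : n - 2 = n + 1 - 1 - 2 := by omega
    rw [e1, e2, e3]
    exact ⟨g2, g1, g0⟩

lemma key (v : ℕ → Fin 3)
    (hsq : ∀ i L, 1 ≤ L → ¬ (∀ j < L, v (i + j) = v (i + L + j)))
    (hav : ∀ i, ¬ (v i = 0 ∧ v (i+1) = 1 ∧ v (i+2) = 2)) : False := by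
  have hg : ∀ n, Good (pref v n) := by
    intro n
    induction n with
    | zero => trivial
    | succ n ih => exact ⟨step_pref v hsq hav n, ih⟩
  have := mem_gen (pref v 30) (hg 30)
  rw [pref_length, gen30] at this
  simp at this

/-- Every infinite square-free ternary word contains all six permutations of `012`
as factors. -/
theorem stmt_7 (w : ℕ → Fin 3)
    (hsf : ∀ u : List (Fin 3), u ≠ [] → ¬ IsFactor (u ++ u) w) :
    ∀ a b c : Fin 3, a ≠ b → b ≠ c → a ≠ c → IsFactor [a, b, c] w := by
  intro a b c hab hbc hac
  by_contra hno
  have hsqw : ∀ i L, 1 ≤ L → ¬ (∀ j < L, w (i + j) = w (i + L + j)) := by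
    intro i L hL h
    set u := (List.range L).map (fun j => w (i+j)) with hu
    have hul : u.length = L := by simp [hu]
    apply hsf u (by intro h'; rw [h'] at hul; simp at hul; omega)
    refine ⟨i, ?_⟩
    intro j
    have hjl : (j : ℕ) < 2 * L := by
      have := j.isLt; simpa [hul, two_mul] using this
    rw [List.get_eq_getElem]
    rcases lt_or_ge (j : ℕ) L with hlt | hge
    · rw [List.getElem_append_left (by omega)]
      simp [hu]
    · rw [List.getElem_append_right (by omega)]
      simp only [hul]
      have hget : u[(j:ℕ) - L]'(by simp [hul]; omega) = w (i + ((j:ℕ) - L)) := by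
        simp [hu]
      rw [hget]
      have e : i + (j : ℕ) = i + L + ((j:ℕ) - L) := by omega
      rw [e]
      exact (h _ (by omega)).symm
  set τ : Fin 3 → Fin 3 := fun x => if x = a then 0 else if x = b then 1 else 2 with hτ
  have hinj : ∀ x y, τ x = τ y → x = y := by
    intro x y
    have H : ∀ a b c x y : Fin 3, a ≠ b → b ≠ c → a ≠ c →
        (if x = a then (0:Fin 3) else if x = b then 1 else 2) =
        (if y = a then (0:Fin 3) else if y = b then 1 else 2) → x = y := by decide
    exact H a b c x y hab hbc hac
  apply key (fun n => τ (w n))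
  · intro i L hL h
    apply hsqw i L hL
    intro j hj
    exact hinj _ _ (h j hj)
  · rintro i ⟨h0, h1, h2⟩
    have H : ∀ a b c x : Fin 3, a ≠ b → b ≠ c → a ≠ c →
        ((if x = a then (0:Fin 3) else if x = b then 1 else 2) = 0 → x = a) ∧
        ((if x = a then (0:Fin 3) else if x = b then 1 else 2) = 1 → x = b) ∧
        ((if x = a then (0:Fin 3) else if x = b then 1 else 2) = 2 → x = c) := by decide
    have ha : w i = a := (H a b c (w i) hab hbc hac).1 h0
    have hb : w (i+1) = b := (H a b c (w (i+1)) hab hbc hac).2.1 h1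
    have hc : w (i+2) = c := (H a b c (w (i+2)) hab hbc hac).2.2 h2
    apply hno
    refine ⟨i, ?_⟩
    intro j
    fin_cases j
    · simpa using ha
    · simpa using hb
    · simpa using hc
end

section
/- Let w be a word in the set S (the closure of {0} under m_a(x)=x01, m_b(x)=x10, and factors) that avoids ABAC.BACA.ABCA, and suppose m_a(w) contains an occurrence h of ABAC.BACA.ABCA in which h(A) is a gentle factor. Then |h(A)| ≡ |h(B)| ≡ |h(C)| ≡ 0 (mod 3), and consequently w itself contains an occurrence of ABAC.BACA.ABCA, a contradiction. -/
/-- A factor is gentle if it has length at least 3 or is one of `00`, `01`, `11`. -/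
def Gentle (s : List (Fin 2)) : Prop :=
  3 ≤ s.length ∨ s = [0, 0] ∨ s = [0, 1] ∨ s = [1, 1]

/-- `a`, `b`, `c` (the images of `A`, `B`, `C`) form an occurrence of the formula
`ABAC.BACA.ABCA` in the word `v`. -/
def OccIn (a b c v : List (Fin 2)) : Prop :=
  a ≠ [] ∧ b ≠ [] ∧ c ≠ [] ∧
    (a ++ b ++ a ++ c) <:+: v ∧ (b ++ a ++ c ++ a) <:+: v ∧ (a ++ b ++ c ++ a) <:+: v

lemma ma_nil : ma [] = [] := rfl
lemma ma_cons (x : Fin 2) (t : List (Fin 2)) : ma (x :: t) = x :: 0 :: 1 :: ma t := rfl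
lemma ma_append (l₁ l₂ : List (Fin 2)) : ma (l₁ ++ l₂) = ma l₁ ++ ma l₂ := by simp [ma]
lemma ma_length (l : List (Fin 2)) : (ma l).length = 3 * l.length := by
  induction l with
  | nil => rfl
  | cons x t ih => simp [ma_cons, ih]; omega
lemma ma_inj : ∀ {l₁ l₂ : List (Fin 2)}, ma l₁ = ma l₂ → l₁ = l₂ := by
  intro l₁
  induction l₁ with
  | nil => intro l₂ h; cases l₂ with
    | nil => rfl
    | cons y t => simp [ma_nil, ma_cons] at h
  | cons x t ih => intro l₂ h; cases l₂ with
    | nil => simp [ma_nil, ma_cons] at h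
    | cons y t' =>
      simp [ma_cons] at h
      obtain ⟨rfl, h⟩ := h
      rw [ih h]
def zee : ℕ → List (Fin 2)
  | 1 => [0, 1]
  | 2 => [1]
  | _ => []

lemma pref_s14 : ∀ (t p v : List (Fin 2)), p ++ v = ma t →
    p ++ zee (p.length % 3) = ma (t.take ((p.length + 2) / 3)) := by
  intro t
  induction t with
  | nil =>
    intro p v h
    rw [ma_nil] at h
    have hp : p = [] := by
      cases p with
      | nil => rfl
      | cons a q => simp at h
    subst hp; simp [zee, ma_nil]
  | cons x t ih =>
    intro p v h
    rw [ma_cons] at h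
    match p with
    | [] => simp [zee, ma_nil]
    | [a] =>
      simp at h
      obtain ⟨rfl, -⟩ := h
      simp [zee, ma_cons, ma_nil]
    | [a, b] =>
      simp at h
      obtain ⟨rfl, rfl, -⟩ := h
      simp [zee, ma_cons, ma_nil]
    | a :: b :: c :: p₃ =>
      simp at h
      obtain ⟨rfl, rfl, rfl, h⟩ := h
      have key := ih p₃ v h
      have h1 : (a :: (0:Fin 2) :: (1:Fin 2) :: p₃).length % 3 = p₃.length % 3 := by simp; omega
      have h2 : ((a :: (0:Fin 2) :: (1:Fin 2) :: p₃).length + 2) / 3 = (p₃.length + 2) / 3 + 1 := by simp; omega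
      rw [h1, h2, List.take_succ_cons, ma_cons]
      simp only [List.cons_append, key]

lemma ma_letter : ∀ (w u : List (Fin 2)) (y : Fin 2) (v : List (Fin 2)),
    ma w = u ++ y :: v →
    (u.length % 3 = 1 → y = 0) ∧ (u.length % 3 = 2 → y = 1) := by
  intro w
  induction w with
  | nil =>
    intro u y v h
    rw [ma_nil] at h
    exact absurd (congrArg List.length h) (by simp)
  | cons x t ih =>
    intro u y v h
    rw [ma_cons] at h
    match u with
    | [] => exact ⟨fun h1 => by simp at h1, fun h2 => by simp at h2⟩
    | [a] =>
      simp at h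
      exact ⟨fun _ => h.2.1.symm, fun h2 => by simp at h2⟩
    | [a, b] =>
      simp at h
      exact ⟨fun h1 => by simp at h1, fun _ => h.2.2.1.symm⟩
    | a :: b :: c :: u₃ =>
      simp at h
      have key := ih u₃ y v h.2.2.2
      have h1 : (a :: b :: c :: u₃).length % 3 = u₃.length % 3 := by
        simp only [List.length_cons]; omega
      rw [h1]
      exact key


lemma phase_congr (w u s v u' v' : List (Fin 2)) (hg : Gentle s)
    (h : ma w = u ++ s ++ v) (h' : ma w = u' ++ s ++ v') :
    u.length % 3 = u'.length % 3 := by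
  -- s has length ≥ 2
  obtain ⟨s0, s1, s₂, rfl⟩ : ∃ s0 s1 s₂, s = s0 :: s1 :: s₂ := by
    rcases hg with hg | rfl | rfl | rfl
    · match s, hg with
      | s0 :: s1 :: s₂, _ => exact ⟨s0, s1, s₂, rfl⟩
    · exact ⟨_, _, _, rfl⟩
    · exact ⟨_, _, _, rfl⟩
    · exact ⟨_, _, _, rfl⟩
  have F : ∀ (u v : List (Fin 2)), ma w = u ++ (s0 :: s1 :: s₂) ++ v →
      (u.length % 3 = 1 → s0 = 0 ∧ s1 = 1) ∧
      (u.length % 3 = 2 → s0 = 1) ∧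
      (u.length % 3 = 0 → s1 = 0) ∧
      (u.length % 3 = 0 → ∀ s2 s₃, s₂ = s2 :: s₃ → s2 = 1) ∧
      (u.length % 3 = 2 → ∀ s2 s₃, s₂ = s2 :: s₃ → s2 = 0) := by
    intro u v h
    have e0 : ma w = u ++ s0 :: (s1 :: s₂ ++ v) := by simpa using h
    have e1 : ma w = (u ++ [s0]) ++ s1 :: (s₂ ++ v) := by simpa using h
    have L0 := ma_letter w u s0 _ e0
    have L1 := ma_letter w (u ++ [s0]) s1 _ e1
    have hl1 : (u ++ [s0]).length = u.length + 1 := by simp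
    refine ⟨fun hr => ⟨L0.1 hr, L1.2 (by omega)⟩, fun hr => L0.2 hr,
      fun hr => L1.1 (by omega), ?_, ?_⟩
    · intro hr s2 s₃ hs₂
      subst hs₂
      have e2 : ma w = (u ++ [s0, s1]) ++ s2 :: (s₃ ++ v) := by simpa using h
      have L2 := ma_letter w (u ++ [s0, s1]) s2 _ e2
      exact L2.2 (by simp; omega)
    · intro hr s2 s₃ hs₂
      subst hs₂
      have e2 : ma w = (u ++ [s0, s1]) ++ s2 :: (s₃ ++ v) := by simpa using h
      have L2 := ma_letter w (u ++ [s0, s1]) s2 _ e2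
      exact L2.1 (by simp; omega)
  have F1 := F u v h
  have F2 := F u' v' h'
  -- now case analysis on residues
  have hr : u.length % 3 = 0 ∨ u.length % 3 = 1 ∨ u.length % 3 = 2 := by omega
  have hr' : u'.length % 3 = 0 ∨ u'.length % 3 = 1 ∨ u'.length % 3 = 2 := by omega
  -- helper: the (0,2) clash needs s₂ nonempty
  have hlong : u.length % 3 ≠ u'.length % 3 → s0 = 1 → s1 = 0 → ∃ s2 s₃, s₂ = s2 :: s₃ := by
    intro _ hs0 hs1
    subst hs0 hs1
    rcases hg with hg | he | he | he
    · match s₂, hg with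
      | s2 :: s₃, _ => exact ⟨s2, s₃, rfl⟩
    all_goals simp at he
  rcases hr with h0 | h0 | h0 <;> rcases hr' with h1 | h1 | h1
  · rw [h0, h1]
  · exact absurd ((F1.2.2.1 h0).symm.trans (F2.1 h1).2) (by decide)
  · obtain ⟨s2, s₃, hs⟩ := hlong (by omega) (F2.2.1 h1) (F1.2.2.1 h0)
    exact absurd ((F1.2.2.2.1 h0 s2 s₃ hs).symm.trans (F2.2.2.2.2 h1 s2 s₃ hs)) (by decide)
  · exact absurd ((F2.2.2.1 h1).symm.trans (F1.1 h0).2) (by decide)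
  · rw [h0, h1]
  · exact absurd ((F1.1 h0).1.symm.trans (F2.2.1 h1)) (by decide)
  · obtain ⟨s2, s₃, hs⟩ := hlong (by omega) (F1.2.1 h0) (F2.2.2.1 h1)
    exact absurd ((F2.2.2.2.1 h1 s2 s₃ hs).symm.trans (F1.2.2.2.2 h0 s2 s₃ hs)) (by decide)
  · exact absurd ((F2.1 h1).1.symm.trans (F1.2.1 h0)) (by decide)
  · rw [h0, h1]

lemma conj : ∀ (w u s v : List (Fin 2)), ma w = u ++ s ++ v → s.length % 3 = 0 →
    s ++ zee (u.length % 3) =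
      zee (u.length % 3) ++ ma ((w.drop ((u.length + 2) / 3)).take (s.length / 3)) := by
  intro w
  induction w with
  | nil =>
    intro u s v h hs
    rw [ma_nil] at h
    rw [List.append_assoc] at h
    obtain ⟨hu, h2⟩ := List.append_eq_nil_iff.mp h.symm
    obtain ⟨hsn, hv⟩ := List.append_eq_nil_iff.mp h2
    subst hu hsn
    simp [zee, ma_nil]
  | cons x t ih =>
    intro u s v h hs
    rw [ma_cons] at h
    match u with
    | [] =>
      have h' : s ++ v = ma (x :: t) := by rw [ma_cons]; simpa using h.symm
      have key := pref_s14 (x :: t) s v h'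
      rw [hs] at key
      have h4 : (s.length + 2) / 3 = s.length / 3 := by omega
      rw [h4] at key
      simpa [zee] using key
    | [a] =>
      simp at h
      obtain ⟨rfl, h⟩ := h
      match s with
      | [] => simp [zee, ma_nil]
      | [s0] => simp at hs
      | [s0, s1] => simp at hs
      | s0 :: s1 :: s₃ =>
        simp at h
        obtain ⟨rfl, rfl, h⟩ := h
        have key := pref_s14 t s₃ v h.symm
        have h3 : s₃.length % 3 = 1 := by simp only [List.length_cons, List.length_nil] at hs ⊢; omega
        have h4 : (s₃.length + 2) / 3 = ((0:Fin 2) :: (1:Fin 2) :: s₃).length / 3 := by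
          simp only [List.length_cons]
        rw [h3, h4] at key
        show ((0:Fin 2) :: (1:Fin 2) :: s₃) ++ zee ([x].length % 3) = _
        have h5 : [x].length % 3 = 1 := by simp
        have h6 : ([x].length + 2) / 3 = 1 := by simp
        rw [h5, h6]
        simp only [zee] at key ⊢
        simp only [List.cons_append, List.nil_append, List.drop_succ_cons, List.drop_zero]
        rw [key]
    | [a, b] =>
      simp at h
      obtain ⟨rfl, rfl, h⟩ := h
      match s with
      | [] => simp [zee, ma_nil]
      | s0 :: s₂ =>
        simp at h
        obtain ⟨rfl, h⟩ := h
        have key := pref_s14 t s₂ v h.symm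
        have h3 : s₂.length % 3 = 2 := by simp only [List.length_cons, List.length_nil] at hs ⊢; omega
        have h4 : (s₂.length + 2) / 3 = ((1:Fin 2) :: s₂).length / 3 := by
          simp at hs ⊢; omega
        rw [h3, h4] at key
        show ((1:Fin 2) :: s₂) ++ zee ([x, 0].length % 3) = _
        have h5 : [x, (0:Fin 2)].length % 3 = 2 := by simp
        have h6 : ([x, (0:Fin 2)].length + 2) / 3 = 1 := by simp
        rw [h5, h6]
        simp only [zee] at key ⊢
        simp only [List.cons_append, List.nil_append, List.drop_succ_cons, List.drop_zero]
        rw [key]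
    | a :: b :: c :: u₃ =>
      simp at h
      obtain ⟨rfl, rfl, rfl, h⟩ := h
      have key := ih u₃ s v (by rw [h, List.append_assoc]) hs
      have h1 : (x :: (0:Fin 2) :: (1:Fin 2) :: u₃).length % 3 = u₃.length % 3 := by simp only [List.length_cons, List.length_nil]; omega
      have h2 : ((x :: (0:Fin 2) :: (1:Fin 2) :: u₃).length + 2) / 3 = (u₃.length + 2) / 3 + 1 := by
        simp only [List.length_cons, List.length_nil]; omega
      show s ++ zee ((x :: (0:Fin 2) :: (1:Fin 2) :: u₃).length % 3) = _
      rw [h1, h2, List.drop_succ_cons]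
      exact key

lemma conj_uniq {s z s₁ s₂ : List (Fin 2)} (h1 : s ++ z = z ++ ma s₁)
    (h2 : s ++ z = z ++ ma s₂) : s₁ = s₂ :=
  ma_inj (List.append_cancel_left (h1.symm.trans h2))

lemma conj_append {s t s' t' z : List (Fin 2)} (hs : s ++ z = z ++ ma s')
    (ht : t ++ z = z ++ ma t') : (s ++ t) ++ z = z ++ ma (s' ++ t') := by
  rw [List.append_assoc, ht, ← List.append_assoc, hs, ma_append, List.append_assoc]

lemma conj' (w u s v : List (Fin 2)) (h : ma w = u ++ s ++ v) (hs : s.length % 3 = 0)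
    (r : ℕ) (hr : u.length % 3 = r) :
    ∃ s', s' <:+: w ∧ s.length = 3 * s'.length ∧ s ++ zee r = zee r ++ ma s' := by
  subst hr
  have key := conj w u s v h hs
  refine ⟨_, ((List.take_prefix _ _).isInfix).trans ((List.drop_suffix _ _).isInfix), ?_, key⟩
  have := congrArg List.length key
  simp only [List.length_append, ma_length] at this
  omega

/-- If `w ∈ S` avoids `ABAC.BACA.ABCA` and `m_a(w)` contains an occurrence whose
image of `A` is gentle, then all three image lengths are `≡ 0 (mod 3)` and `w`
itself contains an occurrence — a contradiction. -/
theorem stmt_14 (w : List (Fin 2)) (hS : InS w)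
    (havoid : ¬ ∃ a b c : List (Fin 2), OccIn a b c w)
    (a b c : List (Fin 2)) (hocc : OccIn a b c (ma w)) (hgentle : Gentle a) :
    (a.length % 3 = 0 ∧ b.length % 3 = 0 ∧ c.length % 3 = 0) ∧ False := by
  obtain ⟨ha, hb, hc, ⟨u1, v1, e1⟩, ⟨u2, v2, e2⟩, ⟨u3, v3, e3⟩⟩ := hocc
  have E1a1 : ma w = u1 ++ a ++ (b ++ (a ++ (c ++ v1))) := by
    rw [← e1]; simp [List.append_assoc]
  have E1a2 : ma w = (u1 ++ a ++ b) ++ a ++ (c ++ v1) := by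
    rw [← e1]; simp [List.append_assoc]
  have E2a1 : ma w = (u2 ++ b) ++ a ++ (c ++ (a ++ v2)) := by
    rw [← e2]; simp [List.append_assoc]
  have E2a2 : ma w = (u2 ++ b ++ a ++ c) ++ a ++ v2 := by
    rw [← e2]; simp [List.append_assoc]
  have E3a1 : ma w = u3 ++ a ++ (b ++ (c ++ (a ++ v3))) := by
    rw [← e3]; simp [List.append_assoc]
  have E3a2 : ma w = (u3 ++ a ++ b ++ c) ++ a ++ v3 := by
    rw [← e3]; simp [List.append_assoc]
  have m1 := phase_congr w u1 a _ _ _ hgentle E1a1 E1a2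
  have m2 := phase_congr w _ a _ _ _ hgentle E2a1 E2a2
  have m3 := phase_congr w u3 a _ _ _ hgentle E3a1 E3a2
  have m4 := phase_congr w u1 a _ _ _ hgentle E1a1 E2a1
  have m5 := phase_congr w u1 a _ _ _ hgentle E1a1 E3a1
  simp only [List.length_append] at m1 m2 m3 m4 m5
  have hA0 : a.length % 3 = 0 := by omega
  have hB0 : b.length % 3 = 0 := by omega
  have hC0 : c.length % 3 = 0 := by omega
  refine ⟨⟨hA0, hB0, hC0⟩, ?_⟩
  set r := u1.length % 3 with hrdef
  obtain ⟨A, hAinf, hAlen, CA⟩ := conj' w u1 a _ E1a1 hA0 r rfl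
  have E1b : ma w = (u1 ++ a) ++ b ++ (a ++ (c ++ v1)) := by
    rw [← e1]; simp [List.append_assoc]
  obtain ⟨B, hBinf, hBlen, CB⟩ := conj' w (u1 ++ a) b _ E1b hB0 r
    (by simp only [List.length_append]; omega)
  have E1c : ma w = (u1 ++ a ++ b ++ a) ++ c ++ v1 := by
    rw [← e1]; simp [List.append_assoc]
  obtain ⟨C, hCinf, hClen, CC⟩ := conj' w (u1 ++ a ++ b ++ a) c _ E1c hC0 r
    (by simp only [List.length_append]; omega)
  have hP1len : (a ++ b ++ a ++ c).length % 3 = 0 := by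
    simp only [List.length_append]; omega
  have hP2len : (b ++ a ++ c ++ a).length % 3 = 0 := by
    simp only [List.length_append]; omega
  have hP3len : (a ++ b ++ c ++ a).length % 3 = 0 := by
    simp only [List.length_append]; omega
  obtain ⟨P1, hP1inf, -, CP1⟩ := conj' w u1 (a ++ b ++ a ++ c) v1 e1.symm hP1len r rfl
  obtain ⟨P2, hP2inf, -, CP2⟩ := conj' w u2 (b ++ a ++ c ++ a) v2 e2.symm hP2len r
    (by omega)
  obtain ⟨P3, hP3inf, -, CP3⟩ := conj' w u3 (a ++ b ++ c ++ a) v3 e3.symm hP3len r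
    (by omega)
  have comp1 := conj_append (conj_append (conj_append CA CB) CA) CC
  have comp2 := conj_append (conj_append (conj_append CB CA) CC) CA
  have comp3 := conj_append (conj_append (conj_append CA CB) CC) CA
  rw [conj_uniq CP1 comp1] at hP1inf
  rw [conj_uniq CP2 comp2] at hP2inf
  rw [conj_uniq CP3 comp3] at hP3inf
  refine havoid ⟨A, B, C, ?_, ?_, ?_, hP1inf, hP2inf, hP3inf⟩
  · intro h; subst h; simp at hAlen; exact ha hAlen
  · intro h; subst h; simp at hBlen; exact hb hBlen
  · intro h; subst h; simp at hClen; exact hc hClen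
end

section
/- Every recurrent infinite ternary word avoiding the formula ABCA.ACBA is square-free. -/
/-- An occurrence of the formula `ABCA.ACBA` in `w`. -/
def OccF (w : ℕ → Fin 3) : Prop :=
  ∃ a b c : List (Fin 3), a ≠ [] ∧ b ≠ [] ∧ c ≠ [] ∧
    IsFactor (a ++ b ++ c ++ a) w ∧ IsFactor (a ++ c ++ b ++ a) w

lemma occ_append {α : Type*} {x y : List α} {w : ℕ → α} {i k : ℕ}
    (hx : OccursAt x w i) (hy : OccursAt y w k) (hk : k = i + x.length) :
    OccursAt (x ++ y) w i := by
  intro j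
  rcases lt_or_ge (j : ℕ) x.length with h | h
  · have := hx ⟨j, h⟩
    simp only [List.get_eq_getElem] at this ⊢
    rw [List.getElem_append_left h]
    exact this
  · have hlt : (j : ℕ) - x.length < y.length := by
      have := j.isLt; simp [List.length_append] at this; omega
    have := hy ⟨(j : ℕ) - x.length, hlt⟩
    simp only [List.get_eq_getElem] at this ⊢
    rw [List.getElem_append_right h]
    have harith : i + (j : ℕ) = k + ((j : ℕ) - x.length) := by omega
    rw [harith]; exact this

lemma occ_split_left {α : Type*} {x y : List α} {w : ℕ → α} {i : ℕ}
    (h : OccursAt (x ++ y) w i) : OccursAt x w i := by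
  intro j
  have hlt : (j : ℕ) < (x ++ y).length :=
    Nat.lt_of_lt_of_le j.isLt (by simp)
  have := h ⟨j, hlt⟩
  simp only [List.get_eq_getElem] at this ⊢
  rw [List.getElem_append_left j.isLt] at this
  exact this

lemma occ_split_right {α : Type*} {x y : List α} {w : ℕ → α} {i : ℕ}
    (h : OccursAt (x ++ y) w i) : OccursAt y w (i + x.length) := by
  intro j
  have hlt : x.length + (j : ℕ) < (x ++ y).length := by
    have := j.isLt; simp only [List.length_append]; omega
  have := h ⟨x.length + (j : ℕ), hlt⟩
  simp only [List.get_eq_getElem] at this ⊢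
  rw [List.getElem_append_right (by omega : x.length ≤ x.length + (j : ℕ))] at this
  simpa [Nat.add_assoc, Nat.add_sub_cancel_left] using this

lemma occ_range {α : Type*} (w : ℕ → α) (m n : ℕ) :
    OccursAt ((List.range n).map (fun k => w (m + k))) w m := by
  intro j
  have hj : (j : ℕ) < n := by
    have := j.isLt; simpa using this
  simp [List.get_eq_getElem, hj]

/-- Every recurrent infinite ternary word avoiding the formula `ABCA.ACBA`
is square-free. -/
theorem stmt_15 (w : ℕ → Fin 3) (hrec : Recurrent w) (havoid : ¬ OccF w) :
    ∀ u : List (Fin 3), u ≠ [] → ¬ IsFactor (u ++ u) w := by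
  rintro u hu ⟨i, hocc⟩
  set L := u.length with hL
  have hL0 : 0 < L := List.length_pos_iff.mpr hu
  obtain ⟨j, hj, hocc2⟩ := hrec (u ++ u) ⟨i, hocc⟩ (i + 2 * L + 1)
  set n := j - (i + 2 * L) with hn
  have hn0 : 0 < n := by omega
  have hjeq : j = i + 2 * L + n := by omega
  set v : List (Fin 3) := (List.range n).map (fun k => w (i + 2 * L + k)) with hv
  have hv0 : v ≠ [] := by
    simp [hv, List.map_eq_nil_iff, List.range_eq_nil]; omega
  have hvlen : v.length = n := by simp [hv]
  have h1 : OccursAt u w i := occ_split_left hocc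
  have h2 : OccursAt u w (i + L) := occ_split_right hocc
  have h3 : OccursAt v w (i + 2 * L) := occ_range w (i + 2 * L) n
  have h4 : OccursAt u w (i + 2 * L + n) := hjeq ▸ occ_split_left hocc2
  have h5 : OccursAt u w (i + 2 * L + n + L) := by
    have := occ_split_right hocc2
    rwa [hjeq] at this
  apply havoid
  refine ⟨u, u, v, hu, hu, hv0, ?_, ?_⟩
  · refine ⟨i, ?_⟩
    refine occ_append (occ_append (occ_append h1 h2 rfl) h3 ?_) h4 ?_
    · simp [List.length_append]; omega
    · simp [List.length_append, hvlen]; omega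
  · refine ⟨i + L, ?_⟩
    refine occ_append (occ_append (occ_append h2 h3 ?_) h4 ?_) h5 ?_
    · omega
    · simp [List.length_append, hvlen]; omega
    · simp [List.length_append, hvlen]; omega
end

section
/- For every k, any k-coloring of the directed graph G (path v_0 v_1 v_2 ... with additional arcs from v_{100i} to v_{100i+2}) contains a non-intersecting directed path whose color sequence is an occurrence of the pattern ABACADABCA; i.e., ABACADABCA is unavoidable on G, which has maximum degree 3. -/
/-!
Pigeonhole on blocks of `100(2k+1)` consecutive vertices starting at multiples of `100` gives two
far-apart blocks `s` and `t` with the same colouring, and pigeonhole inside the block `s` gives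
offsets `x < y < z`, all `≡ 1 (mod 100)`, at which the colour is the same letter `a`. The path
walks along the line from `s + x` to `t + z`, skipping `t + y` by the shortcut arc out of
`t + y - 1`. Its colour sequence is `a B a C a D a B C a`, where `B` and `C` are the colours strictly between
`x`, `y` and `y`, `z` (the same in both blocks), and `D` is what lies between the blocks.
-/

/-- The arcs of the directed graph `G`: `v_i → v_{i+1}` for all `i`, and the shortcut
arcs `v_{100i} → v_{100i+2}`. -/
def Arc (i j : ℕ) : Prop :=
  j = i + 1 ∨ (i % 100 = 0 ∧ j = i + 2)

open List

theorem Finite.exists_add_le_apply_eq {β : Type*} [Finite β] (f : ℕ → β) (N : ℕ) :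
    ∃ i j, i + N ≤ j ∧ f i = f j := by
  obtain ⟨b, hb⟩ := Finite.exists_infinite_fiber f
  rw [Set.infinite_coe_iff] at hb
  obtain ⟨i, hi⟩ := hb.nonempty
  obtain ⟨j, hj, hij⟩ := hb.exists_gt (i + N)
  exact ⟨i, j, hij.le, hi.trans hj.symm⟩

theorem Fintype.exists_lt_lt_apply_eq {α : Type*} [Fintype α] (f : ℕ → α) :
    ∃ r₁ r₂ r₃, r₁ < r₂ ∧ r₂ < r₃ ∧ r₃ ≤ 2 * Fintype.card α ∧ f r₁ = f r₂ ∧ f r₂ = f r₃ := by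
  classical
  obtain ⟨a, -, ha⟩ := Finset.exists_lt_card_fiber_of_mul_lt_card_of_maps_to
    (s := Finset.range (2 * Fintype.card α + 1)) (t := Finset.univ) (n := 2)
    (fun r _ => Finset.mem_univ (f r)) (by simp [mul_comm])
  obtain ⟨t, hts, ht⟩ := Finset.exists_subset_card_eq ha
  have mem (i : Fin 3) := Finset.mem_filter.mp (hts (t.orderEmbOfFin_mem ht i))
  have lt (i j : Fin 3) (hij : i < j) := (t.orderEmbOfFin ht).strictMono hij
  refine ⟨_, _, _, lt 0 1 (by decide), lt 1 2 (by decide), ?_, ?_, ?_⟩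
  · exact Nat.lt_succ_iff.mp (Finset.mem_range.mp (mem 2).1)
  · exact (mem 0).2.trans (mem 1).2.symm
  · exact (mem 1).2.trans (mem 2).2.symm

namespace List.Ico

theorem isChain_arc (n m : ℕ) : (Ico n m).IsChain Arc :=
  (isChain_succ n m).imp fun _ _ h => Or.inl h

theorem isChain_arc_append_of_mod_eq_one {a b v : ℕ} (hv : v % 100 = 1) :
    (Ico a v ++ Ico (v + 1) b).IsChain Arc := by
  refine (isChain_arc a v).append (isChain_arc (v + 1) b) fun u hu w hw => ?_
  have hav : a < v := by
    by_contra! h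
    simp [eq_nil_of_le h] at hu
  have hvb : v + 1 < b := by
    by_contra! h
    simp [eq_nil_of_le h] at hw
  obtain ⟨v, rfl⟩ : ∃ v', v = v' + 1 := ⟨v - 1, by omega⟩
  rw [succ_top (by omega), getLast?_concat, Option.mem_some_iff] at hu
  rw [eq_cons hvb, head?_cons, Option.mem_some_iff] at hw
  exact Or.inr ⟨by omega, by omega⟩

theorem nodup_append_of_le {a b v w : ℕ} (h : v ≤ w) : (Ico a v ++ Ico w b).Nodup :=
  (nodup a v).append (nodup w b) fun u hu hu' => by
    rw [mem] at hu hu'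
    omega

theorem eq_append_cons {a m c : ℕ} (ham : a ≤ m) (hmc : m < c) :
    Ico a c = Ico a m ++ m :: Ico (m + 1) c := by
  rw [← eq_cons hmc, append_consecutive ham hmc.le]

theorem map_add_left_eq {α : Type*} (f : ℕ → α) {s t a b : ℕ}
    (h : ∀ o, a ≤ o → o < b → f (t + o) = f (s + o)) :
    (Ico (t + a) (t + b)).map f = (Ico (s + a) (s + b)).map f := by
  simp only [add_comm t, add_comm s, ← map_add, map_map]
  exact map_congr_left fun o ho => by
    rw [mem] at ho
    simp [add_comm o, h o ho.1 ho.2]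

end List.Ico

theorem map_Ico_append_Ico_eq {α : Type*} (col : ℕ → α) {s t x y z : ℕ} {a : α}
    (hxy : x < y) (hyz : y < z) (hst : s + z < t + x)
    (hs : col (s + x) = a ∧ col (s + y) = a ∧ col (s + z) = a)
    (hts : ∀ o, x ≤ o → o ≤ z → col (t + o) = col (s + o)) :
    (Ico (s + x) (t + y) ++ Ico (t + y + 1) (t + z + 1)).map col =
      [a] ++ (Ico (s + x + 1) (s + y)).map col ++ [a] ++ (Ico (s + y + 1) (s + z)).map col ++
        [a] ++ (Ico (s + z + 1) (t + x)).map col ++ [a] ++ (Ico (s + x + 1) (s + y)).map col ++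
          (Ico (s + y + 1) (s + z)).map col ++ [a] := by
  obtain ⟨hx, hy, hz⟩ := hs
  have htx : col (t + x) = a := (hts x le_rfl (hxy.trans hyz).le).trans hx
  have htz : col (t + z) = a := (hts z (hxy.trans hyz).le le_rfl).trans hz
  have hB := Ico.map_add_left_eq col (a := x + 1) (b := y) (s := s) (t := t)
    fun o h₁ h₂ => hts o (by omega) (by omega)
  have hC := Ico.map_add_left_eq col (a := y + 1) (b := z) (s := s) (t := t)
    fun o h₁ h₂ => hts o (by omega) (by omega)
  rw [← add_assoc, ← add_assoc] at hB hC
  rw [Ico.eq_cons (show s + x < t + y by omega),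
    Ico.eq_append_cons (show s + x + 1 ≤ s + y by omega) (show s + y < t + y by omega),
    Ico.eq_append_cons (show s + y + 1 ≤ s + z by omega) (show s + z < t + y by omega),
    Ico.eq_append_cons (show s + z + 1 ≤ t + x by omega) (show t + x < t + y by omega),
    Ico.succ_top (show t + y + 1 ≤ t + z by omega)]
  simp [hx, hy, hz, htx, htz, hB, hC]

theorem exists_occurrence_of_repeat {α : Type*} (col : ℕ → α) {s t x y z : ℕ}
    (hxy : x + 1 < y) (hyz : y + 1 < z) (hst : s + z + 1 < t + x) (hty : (t + y) % 100 = 1)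
    (hs : col (s + x) = col (s + y) ∧ col (s + y) = col (s + z))
    (hts : ∀ o, x ≤ o → o ≤ z → col (t + o) = col (s + o)) :
    ∃ p : List ℕ, p.Nodup ∧ p.IsChain Arc ∧
      ∃ A B C D : List α, A ≠ [] ∧ B ≠ [] ∧ C ≠ [] ∧ D ≠ [] ∧
        p.map col = A ++ B ++ A ++ C ++ A ++ D ++ A ++ B ++ C ++ A := by
  refine ⟨_, Ico.nodup_append_of_le (Nat.le_succ _), Ico.isChain_arc_append_of_mod_eq_one hty,
    [col (s + z)], (Ico (s + x + 1) (s + y)).map col, (Ico (s + y + 1) (s + z)).map col,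
    (Ico (s + z + 1) (t + x)).map col, cons_ne_nil _ _, ?_, ?_, ?_,
    map_Ico_append_Ico_eq col (by omega) (by omega) (by omega) ⟨hs.1.trans hs.2, hs.2, rfl⟩ hts⟩ <;>
  simp only [ne_eq, map_eq_nil_iff, Ico.eq_empty_iff] <;> omega

theorem stmt_18_general (k : ℕ) (col : ℕ → Fin k) :
    ∃ p : List ℕ, p.Nodup ∧ p.Chain' Arc ∧
      ∃ A B C D : List (Fin k), A ≠ [] ∧ B ≠ [] ∧ C ≠ [] ∧ D ≠ [] ∧
        p.map col = A ++ B ++ A ++ C ++ A ++ D ++ A ++ B ++ C ++ A := by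
  obtain ⟨i, j, hij, hwindow⟩ := Finite.exists_add_le_apply_eq
    (fun i (o : Fin (100 * (2 * k + 1))) => col (100 * i + o)) (2 * k + 2)
  obtain ⟨r₁, r₂, r₃, h₁₂, h₂₃, h₃, hcol⟩ :=
    Fintype.exists_lt_lt_apply_eq fun r => col (100 * i + (100 * r + 1))
  rw [Fintype.card_fin] at h₃
  exact exists_occurrence_of_repeat col (by omega) (by omega) (by omega) (by omega) hcol
    fun o _ ho => (congrFun hwindow ⟨o, by omega⟩).symm

/-- The pattern `ABACADABCA` is unavoidable on `G` (which has maximum degree 3):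
every `k`-coloring of `G` admits a non-intersecting directed path whose color
sequence is an occurrence of `ABACADABCA`. -/
theorem stmt_18 (k : ℕ) (hk : 0 < k) (col : ℕ → Fin k) :
    ∃ p : List ℕ, p.Nodup ∧ p.Chain' Arc ∧
      ∃ A B C D : List (Fin k), A ≠ [] ∧ B ≠ [] ∧ C ≠ [] ∧ D ≠ [] ∧
        p.map col = A ++ B ++ A ++ C ++ A ++ D ++ A ++ B ++ C ++ A :=
  stmt_18_general k col
end

section
/- If two disjoint segments of the path part of G carry the same color sequence, and each contains an occurrence of ABACA with A mapped to a single letter placed at vertices of index ≡ 1 (mod 100), then using a shortcut arc v_{100j} → v_{100j+2} to skip one occurrence of A in the left segment produces an occurrence of ABACADABCA in G. -/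
/-!
The path runs along `v_{q₁}, …, v_{q₂+d-1}, v_{q₂+d+1}, …, v_{q₃+d}`, where `t = s + d`: it leaves
out the right copy `v_{q₂+d}` of the middle `a`, using the shortcut arc out of `v_{q₂+d-1}`,
whose index is `≡ 0 (mod 100)` because `d ≡ 0`. Reading its colours, and identifying the
right segment with the left one through the translation by `d`, gives
`a·B·a·C·a·D·a·B` up to the skipped vertex and `C·a` after it, with `D` the colours strictly
between `q₃` and `q₁ + d`. It is nonempty: disjointness gives `q₃ < q₁ + d`, and
`q₁ + d ≡ 1 ≢ 2 ≡ q₃ + 1 (mod 100)`.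
-/

theorem isChain_arc_Ico (i j : ℕ) : (List.Ico i j).IsChain Arc :=
  (List.Ico.isChain_succ i j).imp fun _ _ h => by rw [Arc]; exact Or.inl h

theorem isChain_arc_Ico_append_Ico {i k j : ℕ} (hk : k % 100 = 1) :
    (List.Ico i k ++ List.Ico (k + 1) j).IsChain Arc := by
  obtain ⟨m, rfl⟩ : ∃ m, k = m + 1 := ⟨k - 1, by omega⟩
  refine (isChain_arc_Ico i (m + 1)).append (isChain_arc_Ico (m + 2) j) fun x hx y hy => ?_
  have hx_eq : x = m := by
    rcases le_or_gt i m with him | him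
    · simpa [List.Ico.succ_top him] using hx.symm
    · simp [List.Ico.eq_nil_of_le him] at hx
  have hy_eq : y = m + 2 := by
    rcases lt_or_ge (m + 2) j with hmj | hmj
    · simpa [List.Ico.eq_cons hmj] using hy.symm
    · simp [List.Ico.eq_nil_of_le hmj] at hy
  rw [Arc]
  exact Or.inr ⟨by omega, by omega⟩

theorem nodup_Ico_append_Ico {i k l j : ℕ} (hkl : k ≤ l) :
    (List.Ico i k ++ List.Ico l j).Nodup :=
  (List.Ico.nodup i k).append (List.Ico.nodup l j) fun x hx hx' => by
    rw [List.Ico.mem] at hx hx'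
    omega

section ColorWords

variable {α : Type*} (f : ℕ → α)

theorem map_range_eq_map_Ico (i j : ℕ) :
    (List.range (j - i)).map (fun k => f (i + k)) = (List.Ico i j).map f := by
  rw [List.Ico, List.range'_eq_map_range, List.map_map]
  rfl

theorem map_Ico_eq_cons {i j : ℕ} (h : i < j) :
    (List.Ico i j).map f = [f i] ++ (List.Ico (i + 1) j).map f := by
  rw [List.Ico.eq_cons h]
  rfl

variable {f}

theorem map_Ico_add {i j d : ℕ} (h : ∀ x ∈ List.Ico i j, f (x + d) = f x) :
    (List.Ico (i + d) (j + d)).map f = (List.Ico i j).map f := by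
  rw [← List.Ico.map_add, List.map_map]
  exact List.map_congr_left fun x hx => by simpa [add_comm] using h x hx

end ColorWords

/-- Two disjoint, `mod 100`-aligned segments of the path of `G` with identical color
sequences, each containing an occurrence `a·B·a·C·a` of `ABACA` with the letters `a`
at positions `≡ 1 (mod 100)`, combine — using a shortcut arc to skip one single-letter
occurrence of `a` — into a non-intersecting directed path whose color sequence is
`a·B·a·C·a·D·a·B·C·a`, an occurrence of `ABACADABCA`. -/
theorem stmt_19 {α : Type*} (col : ℕ → α) (s t L : ℕ)
    (hdisj : s + L ≤ t) (halign : t % 100 = s % 100)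
    (hsame : ∀ j < L, col (s + j) = col (t + j))
    (q₁ q₂ q₃ : ℕ) (h1 : s ≤ q₁) (h12 : q₁ < q₂) (h23 : q₂ < q₃) (h3 : q₃ < s + L)
    (hm1 : q₁ % 100 = 1) (hm2 : q₂ % 100 = 1) (hm3 : q₃ % 100 = 1)
    (a : α) (ha1 : col q₁ = a) (ha2 : col q₂ = a) (ha3 : col q₃ = a)
    (B C : List α)
    (hB : B = (List.range (q₂ - q₁ - 1)).map fun j => col (q₁ + 1 + j))
    (hC : C = (List.range (q₃ - q₂ - 1)).map fun j => col (q₂ + 1 + j)) :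
    ∃ D : List α, D ≠ [] ∧ ∃ p : List ℕ, p.Nodup ∧ p.Chain' Arc ∧
      p.map col = [a] ++ B ++ [a] ++ C ++ [a] ++ D ++ [a] ++ B ++ C ++ [a] := by
  obtain ⟨d, rfl⟩ : ∃ d, t = s + d := ⟨t - s, by omega⟩
  have hshift (x : ℕ) (hsx : s ≤ x) (hxL : x < s + L) : col (x + d) = col x := by
    obtain ⟨j, rfl⟩ := Nat.exists_eq_add_of_le hsx
    rw [add_right_comm]
    exact (hsame j (by omega)).symm
  have hshift_on {i j : ℕ} (hi : s ≤ i) (hj : j ≤ s + L) :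
      ∀ x ∈ List.Ico i j, col (x + d) = col x := fun x hx => by
    rw [List.Ico.mem] at hx
    exact hshift x (by omega) (by omega)
  rw [Nat.sub_sub, map_range_eq_map_Ico] at hB hC
  have hB' : (List.Ico (q₁ + d + 1) (q₂ + d)).map col = B := by
    rw [hB, show q₁ + d + 1 = q₁ + 1 + d by omega, map_Ico_add (hshift_on (by omega) (by omega))]
  have hC' : (List.Ico (q₂ + d + 1) (q₃ + d)).map col = C := by
    rw [hC, show q₂ + d + 1 = q₂ + 1 + d by omega, map_Ico_add (hshift_on (by omega) (by omega))]
  have ha1' : col (q₁ + d) = a := hshift q₁ h1 (by omega) ▸ ha1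
  have ha3' : col (q₃ + d) = a := hshift q₃ (by omega) h3 ▸ ha3
  refine ⟨(List.Ico (q₃ + 1) (q₁ + d)).map col, by
      rw [ne_eq, List.map_eq_nil_iff, List.Ico.eq_empty_iff]; omega,
    List.Ico q₁ (q₂ + d) ++ List.Ico (q₂ + d + 1) (q₃ + d + 1),
    nodup_Ico_append_Ico (by omega), isChain_arc_Ico_append_Ico (by omega), ?_⟩
  rw [← List.Ico.append_consecutive h12.le (by omega : q₂ ≤ q₂ + d),
    ← List.Ico.append_consecutive h23.le (by omega : q₃ ≤ q₂ + d),
    ← List.Ico.append_consecutive (by omega : q₃ ≤ q₁ + d) (by omega : q₁ + d ≤ q₂ + d),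
    List.Ico.succ_top (by omega : q₂ + d + 1 ≤ q₃ + d)]
  simp only [List.map_append]
  rw [map_Ico_eq_cons col h12, map_Ico_eq_cons col h23,
    map_Ico_eq_cons col (by omega : q₃ < q₁ + d),
    map_Ico_eq_cons col (by omega : q₁ + d < q₂ + d), ← hB, ← hC, hB', hC']
  simp [ha1, ha2, ha3, ha1', ha3']
end
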